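/- arXiv:math/0308004 — 7 statements merged into one kernel-verified Lean document; each statement's English description precedes it below -/
import Mathlib

section
/- Let $K$ be an infinite field and $P = K[x_1,\dots,x_n]$. If an ideal $I \subseteq P$ is fixed by every upper-triangular invertible linear change of coordinates (i.e., $I$ is Borel-fixed), then $I$ is a monomial ideal. -/
open MvPolynomial

noncomputable section
/-- The action of a matrix `g` on `K[x_1,…,x_n]`, sending `x_j` to `∑ i, g i j • x_i`. -/
def matAct (n : ℕ) (K : Type*) [Field K] (g : Matrix (Fin n) (Fin n) K) :
    MvPolynomial (Fin n) K →ₐ[K] MvPolynomial (Fin n) K :=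
  aeval fun j => ∑ i, g i j • X i

/-- An ideal is a monomial ideal if it is generated by monomials. -/
def IsMonomialIdeal (n : ℕ) (K : Type*) [Field K]
    (I : Ideal (MvPolynomial (Fin n) K)) : Prop :=
  ∃ S : Set (Fin n →₀ ℕ), I = Ideal.span ((fun d => monomial d (1 : K)) '' S)

/-- `I` is Borel-fixed: fixed by every invertible upper-triangular change of coordinates. -/
def IsBorelFixed (n : ℕ) (K : Type*) [Field K]
    (I : Ideal (MvPolynomial (Fin n) K)) : Prop :=
  ∀ g : Matrix (Fin n) (Fin n) K, IsUnit g.det → g.BlockTriangular id →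
    Ideal.map (matAct n K g) I = I

lemma matAct_diag_monomial (n : ℕ) (K : Type*) [Field K] (v : Fin n → K)
    (d : Fin n →₀ ℕ) (c : K) :
    matAct n K (Matrix.diagonal v) (monomial d c)
      = monomial d ((∏ j ∈ d.support, v j ^ d j) * c) := by
  have hX : (fun j => ∑ i, Matrix.diagonal v i j • (X i : MvPolynomial (Fin n) K))
      = fun j => v j • X j := by
    funext j
    rw [Finset.sum_eq_single j]
    · simp [Matrix.diagonal]
    · intro b _ hb; simp [Matrix.diagonal_apply_ne _ hb]
    · simp
  rw [matAct, hX, aeval_monomial]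
  rw [Finsupp.prod]
  have h2 : ∏ j ∈ d.support, (v j • (X j : MvPolynomial (Fin n) K)) ^ d j
      = C (∏ j ∈ d.support, v j ^ d j) * ∏ j ∈ d.support, (X j : MvPolynomial (Fin n) K) ^ d j := by
    rw [map_prod, ← Finset.prod_mul_distrib]
    refine Finset.prod_congr rfl fun j _ => ?_
    rw [smul_pow, smul_eq_C_mul]
  rw [h2, ← Finsupp.prod, monomial_eq]
  rw [algebraMap_eq, Finsupp.prod, ← mul_assoc, ← map_mul, mul_comm c, Finsupp.prod]

lemma matAct_diag_coeff (n : ℕ) (K : Type*) [Field K] (v : Fin n → K)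
    (f : MvPolynomial (Fin n) K) (m : Fin n →₀ ℕ) :
    coeff m (matAct n K (Matrix.diagonal v) f)
      = (∏ j ∈ m.support, v j ^ m j) * coeff m f := by
  conv_lhs => rw [f.as_sum, map_sum]
  rw [coeff_sum]
  simp only [matAct_diag_monomial, coeff_monomial]
  rw [Finset.sum_ite_eq' f.support m]
  split_ifs with h
  · rfl
  · rw [notMem_support_iff.mp h, mul_zero]

lemma prod_ite_pow (n : ℕ) (K : Type*) [Field K] (i : Fin n) (t : K) (m : Fin n →₀ ℕ) :
    ∏ j ∈ m.support, (if j = i then t else 1) ^ m j = t ^ m i := by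
  rcases eq_or_ne (m i) 0 with h0 | h0
  · rw [h0, pow_zero, Finset.prod_eq_one]
    intro j hj
    have hji : j ≠ i := fun e => (Finsupp.mem_support_iff.mp hj) (e ▸ h0)
    simp [hji]
  · rw [Finset.prod_eq_single_of_mem i (Finsupp.mem_support_iff.mpr h0)]
    · simp
    · intro b _ hb; simp [hb]

lemma key_lemma (n : ℕ) (K : Type*) [Field K] [Infinite K]
    (I : Ideal (MvPolynomial (Fin n) K)) (hI : IsBorelFixed n K I) :
    ∀ N (f : MvPolynomial (Fin n) K), f.support.card ≤ N → f ∈ I →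
      ∀ d ∈ f.support, monomial d (1 : K) ∈ I := by
  intro N
  induction N with
  | zero =>
    intro f hcard _ d hd
    rw [Nat.le_zero, Finset.card_eq_zero] at hcard
    simp [hcard] at hd
  | succ N IH =>
    intro f hcard hf d hd
    by_cases hone : f.support ⊆ {d}
    · -- f is a single monomial
      have hsupp : f.support = {d} := Finset.Subset.antisymm hone (Finset.singleton_subset_iff.mpr hd)
      have hc : coeff d f ≠ 0 := mem_support_iff.mp hd
      have hfeq : f = monomial d (coeff d f) := by
        conv_lhs => rw [f.as_sum, hsupp]
        rw [Finset.sum_singleton]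
      have : C (coeff d f)⁻¹ * f ∈ I := Ideal.mul_mem_left _ _ hf
      rw [hfeq] at this
      rwa [C_mul_monomial, coeff_monomial, if_pos rfl, inv_mul_cancel₀ hc] at this
    · -- there are at least two monomials
      obtain ⟨e, he, hed⟩ : ∃ e ∈ f.support, e ≠ d := by
        by_contra hcon
        push_neg at hcon
        exact hone fun m hm => Finset.mem_singleton.mpr (hcon m hm)
      obtain ⟨i, hi⟩ : ∃ i, d i ≠ e i := by
        by_contra hcon
        push_neg at hcon
        exact hed (Finsupp.ext fun i => (hcon i).symm)
      -- find t with t ≠ 0 and t ^ e i ≠ t ^ d i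
      have hq : (Polynomial.X ^ e i - Polynomial.X ^ d i : Polynomial K) ≠ 0 := by
        intro h
        have := congrArg (fun p => Polynomial.coeff p (e i)) h
        simp [Polynomial.coeff_X_pow, (Ne.symm hi : e i ≠ d i)] at this
      have hfin : {x : K | (Polynomial.X ^ e i - Polynomial.X ^ d i : Polynomial K).IsRoot x}.Finite :=
        Polynomial.finite_setOf_isRoot hq
      obtain ⟨t, ht⟩ := (hfin.union (Set.finite_singleton 0)).infinite_compl.nonempty
      simp only [Set.mem_compl_iff, Set.mem_union, Set.mem_setOf_eq, Set.mem_singleton_iff,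
        not_or, Polynomial.IsRoot] at ht
      obtain ⟨hroot, ht0⟩ := ht
      have hpow : t ^ e i ≠ t ^ d i := by
        intro h
        apply hroot
        simp [h]
      set v : Fin n → K := fun j => if j = i then t else 1 with hv
      have hdet : IsUnit (Matrix.diagonal v).det := by
        rw [Matrix.det_diagonal, isUnit_iff_ne_zero]
        refine Finset.prod_ne_zero_iff.mpr fun j _ => ?_
        simp only [hv]
        split_ifs
        · exact ht0
        · exact one_ne_zero
      have htri : (Matrix.diagonal v).BlockTriangular id := Matrix.blockTriangular_diagonal v
      have hgf : matAct n K (Matrix.diagonal v) f ∈ I := by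
        rw [← hI (Matrix.diagonal v) hdet htri]
        exact Ideal.mem_map_of_mem _ hf
      set h : MvPolynomial (Fin n) K := matAct n K (Matrix.diagonal v) f - C (t ^ d i) * f with hh
      have hhI : h ∈ I := Ideal.sub_mem _ hgf (Ideal.mul_mem_left _ _ hf)
      have hco : ∀ m, coeff m h = (t ^ m i - t ^ d i) * coeff m f := by
        intro m
        rw [hh, coeff_sub, matAct_diag_coeff, coeff_C_mul, ← sub_mul]
        congr 2
        exact prod_ite_pow n K i t m
      have hsub : h.support ⊆ f.support.erase d := by
        intro m hm
        rw [Finset.mem_erase]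
        constructor
        · intro hmd
          apply mem_support_iff.mp hm
          rw [hco, hmd, sub_self, zero_mul]
        · rw [mem_support_iff] at hm ⊢
          intro h0
          exact hm (by rw [hco, h0, mul_zero])
      have hdn : d ∉ h.support := fun hmem => (Finset.mem_erase.mp (hsub hmem)).1 rfl
      have heh : e ∈ h.support := by
        rw [mem_support_iff, hco]
        exact mul_ne_zero (sub_ne_zero.mpr hpow) (mem_support_iff.mp he)
      have hcardh : h.support.card ≤ N := by
        have h1 := Finset.card_le_card hsub
        have h2 := Finset.card_erase_of_mem hd
        omega
      have hmono : ∀ m ∈ h.support, monomial m (1 : K) ∈ I := IH h hcardh hhI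
      set f' : MvPolynomial (Fin n) K := f - ∑ m ∈ h.support, monomial m (coeff m f) with hf'
      have hf'I : f' ∈ I := by
        refine Ideal.sub_mem _ hf (Ideal.sum_mem _ fun m hm => ?_)
        have : monomial m (coeff m f) = C (coeff m f) * monomial m 1 := by
          rw [C_mul_monomial, mul_one]
        rw [this]
        exact Ideal.mul_mem_left _ _ (hmono m hm)
      have hcoef' : ∀ m, coeff m f' = if m ∈ h.support then 0 else coeff m f := by
        intro m
        rw [hf', coeff_sub, coeff_sum]
        simp only [coeff_monomial]
        rw [Finset.sum_ite_eq' h.support m]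
        split_ifs <;> simp
      have hsub' : f'.support ⊆ f.support.erase e := by
        intro m hm
        rw [mem_support_iff, hcoef'] at hm
        rw [Finset.mem_erase]
        constructor
        · rintro rfl
          exact hm (if_pos heh)
        · rw [mem_support_iff]
          intro h0
          apply hm
          split_ifs <;> simp [h0]
      have hcard' : f'.support.card ≤ N := by
        have h1 := Finset.card_le_card hsub'
        have h2 := Finset.card_erase_of_mem he
        omega
      have hd' : d ∈ f'.support := by
        rw [mem_support_iff, hcoef', if_neg hdn]
        exact mem_support_iff.mp hd
      exact IH f' hcard' hf'I d hd'

/-- over an infinite field, every Borel-fixed ideal is a monomial ideal. -/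
theorem borelFixed_isMonomialIdeal (n : ℕ) (K : Type*) [Field K] [Infinite K]
    (I : Ideal (MvPolynomial (Fin n) K)) (hI : IsBorelFixed n K I) :
    IsMonomialIdeal n K I := by
  refine ⟨{d | monomial d (1 : K) ∈ I}, le_antisymm ?_ ?_⟩
  · intro f hf
    rw [f.as_sum]
    refine Ideal.sum_mem _ fun m hm => ?_
    have hmI : monomial m (1 : K) ∈ I :=
      key_lemma n K I hI f.support.card f le_rfl hf m hm
    have : monomial m (coeff m f) = C (coeff m f) * monomial m 1 := by
      rw [C_mul_monomial, mul_one]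
    rw [this]
    exact Ideal.mul_mem_left _ _ (Ideal.subset_span ⟨m, hmI, rfl⟩)
  · rw [Ideal.span_le]
    rintro _ ⟨m, hm, rfl⟩
    exact hm
end
end

section
/- Let $K$ be a field of characteristic zero and let $I$ be a strongly stable monomial ideal in $P = K[x_1,\dots,x_n]$. Then $I$ is Borel-fixed: $\mathfrak{g}(I) = I$ for every invertible upper-triangular matrix $\mathfrak{g} \in GL(n,K)$. -/
open MvPolynomial

noncomputable section
/-- The strongly stable exchange property: if the monomial `x^d ∈ I`, `x_j ∣ x^d` and `i ≤ j`,
then `x_i · x^d / x_j ∈ I`.  (Variables with smaller index are the larger ones.) -/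
def StronglyStableMoves (n : ℕ) (K : Type*) [Field K]
    (I : Ideal (MvPolynomial (Fin n) K)) : Prop :=
  ∀ d : Fin n →₀ ℕ, monomial d (1 : K) ∈ I →
    ∀ i j : Fin n, i ≤ j → d j ≠ 0 →
      monomial (d - Finsupp.single j 1 + Finsupp.single i 1) (1 : K) ∈ I

lemma matAct_one (n : ℕ) (K : Type*) [Field K] : matAct n K 1 = AlgHom.id K _ := by
  apply MvPolynomial.algHom_ext
  intro j
  simp [matAct, Matrix.one_apply, ite_smul]

lemma matAct_comp (n : ℕ) (K : Type*) [Field K] (g h : Matrix (Fin n) (Fin n) K) :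
    (matAct n K g).comp (matAct n K h) = matAct n K (g * h) := by
  apply MvPolynomial.algHom_ext
  intro j
  simp only [matAct, AlgHom.comp_apply, aeval_X, map_sum, map_smul, Matrix.mul_apply]
  simp only [Finset.smul_sum, Finset.sum_smul, smul_smul]
  rw [Finset.sum_comm]
  simp [mul_comm]

lemma matAct_key (n : ℕ) (K : Type*) [Field K] (I : Ideal (MvPolynomial (Fin n) K))
    (hss : StronglyStableMoves n K I) (g : Matrix (Fin n) (Fin n) K)
    (hg : g.BlockTriangular id) :
    ∀ m : ℕ, ∀ d e : Fin n →₀ ℕ, (d.sum fun _ k => k) = m →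
      monomial (d + e) (1 : K) ∈ I →
      monomial e (1 : K) * matAct n K g (monomial d 1) ∈ I := by
  intro m
  induction m with
  | zero =>
    intro d e hdeg hmem
    have hd : d = 0 := by
      ext a
      by_contra h
      have ha : a ∈ d.support := Finsupp.mem_support_iff.2 h
      rw [Finsupp.sum] at hdeg
      exact h ((Finset.sum_eq_zero_iff.1 hdeg) a ha)
    subst hd
    simpa using hmem
  | succ m ih =>
    intro d e hdeg hmem
    have hd0 : d ≠ 0 := by
      rintro rfl
      simp [Finsupp.sum] at hdeg
    obtain ⟨j, hj⟩ : ∃ j, d j ≠ 0 := by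
      by_contra h
      push_neg at h
      exact hd0 (Finsupp.ext h)
    set d' : Fin n →₀ ℕ := d - Finsupp.single j 1 with hd'
    have hsplit : d = d' + Finsupp.single j 1 := by
      ext a
      simp only [hd', Finsupp.add_apply, Finsupp.tsub_apply, Finsupp.single_apply]
      rcases eq_or_ne j a with rfl | hja
      · simp; omega
      · simp [hja]
    have hdeg' : (d'.sum fun _ k => k) = m := by
      have h1 : (d.sum fun _ k => k)
          = (d'.sum fun _ k => k) + ((Finsupp.single j 1).sum fun _ k => k) := by
        rw [hsplit]
        exact Finsupp.sum_add_index' (fun _ => rfl) (fun _ _ _ => rfl)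
      rw [Finsupp.sum_single_index rfl] at h1
      omega
    have hmono : monomial d (1 : K) = monomial d' 1 * X j := by
      rw [X, monomial_mul, mul_one, ← hsplit]
    rw [hmono, map_mul]
    have hXj : matAct n K g (X j) = ∑ i, g i j • X i := by
      simp [matAct]
    rw [hXj, Finset.mul_sum, Finset.mul_sum]
    apply Ideal.sum_mem
    intro i _
    have hx : (monomial (e + Finsupp.single i 1) (1 : K)) = monomial e 1 * X i := by
      rw [X, monomial_mul, mul_one]
    have hterm : monomial e (1 : K) * (matAct n K g (monomial d' 1) * (g i j • X i))
        = g i j • (monomial (e + Finsupp.single i 1) (1 : K) * matAct n K g (monomial d' 1)) := by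
      rw [hx, smul_eq_C_mul, smul_eq_C_mul]
      ring
    rw [hterm]
    rcases eq_or_ne (g i j) 0 with hz | hz
    · simp [hz]
    · have hij : i ≤ j := by
        by_contra h
        exact hz (hg (by simpa using not_le.1 h))
      rw [smul_eq_C_mul]
      apply Ideal.mul_mem_left
      apply ih d' (e + Finsupp.single i 1) hdeg'
      have := hss (d + e) (by simpa using hmem) i j hij (by simp [Finsupp.add_apply]; omega)
      have harith : d + e - Finsupp.single j 1 + Finsupp.single i 1
          = d' + (e + Finsupp.single i 1) := by
        ext a
        simp only [hd', Finsupp.add_apply, Finsupp.tsub_apply, Finsupp.single_apply]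
        rcases eq_or_ne j a with rfl | hja
        · simp; omega
        · simp [hja]; split_ifs <;> omega
      rwa [harith] at this

lemma matAct_map_le (n : ℕ) (K : Type*) [Field K]
    (I : Ideal (MvPolynomial (Fin n) K)) (hmon : IsMonomialIdeal n K I)
    (hss : StronglyStableMoves n K I)
    (g : Matrix (Fin n) (Fin n) K) (hg : g.BlockTriangular id) :
    Ideal.map (matAct n K g) I ≤ I := by
  obtain ⟨S, hS⟩ := hmon
  conv_lhs => rw [hS]
  rw [Ideal.map_span, Ideal.span_le]
  rintro _ ⟨_, ⟨d, _, rfl⟩, rfl⟩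
  have hmem : monomial d (1 : K) ∈ I := by
    rw [hS]
    exact Ideal.subset_span ⟨d, ‹_›, rfl⟩
  have := matAct_key n K I hss g hg (d.sum fun _ k => k) d 0 rfl (by simpa using hmem)
  simpa using this

/-- in characteristic zero, strongly stable monomial ideals are Borel-fixed. -/
theorem stronglyStable_isBorelFixed (n : ℕ) (K : Type*) [Field K] [CharZero K]
    (I : Ideal (MvPolynomial (Fin n) K)) (hmon : IsMonomialIdeal n K I)
    (hss : StronglyStableMoves n K I) :
    IsBorelFixed n K I := by
  intro g hdet htri
  haveI : Invertible g := g.invertibleOfIsUnitDet hdet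
  have htri' : (g⁻¹).BlockTriangular id := Matrix.blockTriangular_inv_of_blockTriangular htri
  have h1 := matAct_map_le n K I hmon hss g htri
  have h2 := matAct_map_le n K I hmon hss g⁻¹ htri'
  refine le_antisymm h1 ?_
  intro x hx
  have hxy : matAct n K g (matAct n K g⁻¹ x) = x := by
    have : (matAct n K g).comp (matAct n K g⁻¹) = AlgHom.id K _ := by
      rw [matAct_comp, Matrix.mul_nonsing_inv g hdet, matAct_one]
    calc matAct n K g (matAct n K g⁻¹ x)
        = ((matAct n K g).comp (matAct n K g⁻¹)) x := rfl
      _ = x := by rw [this]; rfl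
  have : matAct n K g⁻¹ x ∈ I := h2 (Ideal.mem_map_of_mem _ hx)
  have := Ideal.mem_map_of_mem (matAct n K g) this
  rwa [hxy] at this
end
end

section
/- Let $\mathcal{L}$ be a distraction matrix. For every degree $d$, the $K$-linear map $D_{\mathcal{L}}: P_d \to P_d$ is a bijection (an automorphism of the $K$-vector space $P_d$). Consequently, $\dim_K V = \dim_K D_{\mathcal{L}}(V)$ for every subspace $V \subseteq P_d$. -/
/-!
`D_L` is homogeneous of degree `0`, so it commutes with taking homogeneous components, and it is
surjective on all of `P`: the span of the `D_L(x^d)` contains `1 = D_L(1)` and is stable under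
multiplication by each `x_k`, because `x_k` is a combination of the `L i (d i + 1)` and
`L i (d i + 1) · D_L(x^d) = D_L(x^d x_i)`. Hence `D_L` maps each finite-dimensional `P_d` onto
itself, so it is injective there, and it preserves the rank of every subspace of `P_d`.
-/

open MvPolynomial

noncomputable section
/-- A distraction matrix: a family of linear forms `L i j` (`1 ≤ i ≤ n`, `j ∈ ℕ`) such that
every selection `L 1 j₁, …, L n jₙ` spans the space of linear forms, and every row is
eventually constant. -/
def IsDistractionMatrix (n : ℕ) (K : Type*) [Field K]
    (L : Fin n → ℕ → MvPolynomial (Fin n) K) : Prop :=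
  (∀ i j, (L i j).IsHomogeneous 1) ∧
  (∀ js : Fin n → ℕ, ∀ k : Fin n,
      (X k : MvPolynomial (Fin n) K) ∈
        Submodule.span K (Set.range fun i => L i (js i))) ∧
  (∃ N : ℕ, ∀ i : Fin n, ∀ j : ℕ, N < j → L i j = L i N)

/-- The distraction of the monomial `x^d`: `∏ i ∏_{j=1}^{d i} L i j`. -/
def distrMon (n : ℕ) (K : Type*) [Field K]
    (L : Fin n → ℕ → MvPolynomial (Fin n) K) (d : Fin n →₀ ℕ) :
    MvPolynomial (Fin n) K :=
  ∏ i, ∏ j ∈ Finset.range (d i), L i (j + 1)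

/-- The distraction operator `D_L`, extended `K`-linearly from monomials to all of `P`. -/
def distr (n : ℕ) (K : Type*) [Field K]
    (L : Fin n → ℕ → MvPolynomial (Fin n) K) (f : MvPolynomial (Fin n) K) :
    MvPolynomial (Fin n) K :=
  ∑ d ∈ f.support, coeff d f • distrMon n K L d

/-- A monomial vector subspace: a subspace spanned by monomials. -/
def IsMonomialSubspace (n : ℕ) (K : Type*) [Field K]
    (V : Submodule K (MvPolynomial (Fin n) K)) : Prop :=
  ∃ S : Set (Fin n →₀ ℕ), V = Submodule.span K ((fun d => monomial d (1 : K)) '' S)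

/-- The image `D_L(V)` of a subspace under the distraction operator (as a subspace). -/
def distrSub (n : ℕ) (K : Type*) [Field K]
    (L : Fin n → ℕ → MvPolynomial (Fin n) K)
    (V : Submodule K (MvPolynomial (Fin n) K)) :
    Submodule K (MvPolynomial (Fin n) K) :=
  Submodule.span K (distr n K L '' V)

/-- The product `V·W` of two subspaces of the polynomial ring. -/
def mulSub (n : ℕ) (K : Type*) [Field K]
    (V W : Submodule K (MvPolynomial (Fin n) K)) :
    Submodule K (MvPolynomial (Fin n) K) :=
  Submodule.span K {p | ∃ v ∈ V, ∃ w ∈ W, p = v * w}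

open Set

universe u v

instance {σ R : Type*} [CommSemiring R] [Finite σ] (e : ℕ) :
    Module.Finite R (homogeneousSubmodule σ R e) :=
  Module.Finite.iff_fg.mpr (homogeneousSubmodule_fg σ R e)

theorem LinearMap.injOn_of_surjOn {R M : Type*} [Semiring R] [OrzechProperty R]
    [AddCommMonoid M] [Module R M] {f : M →ₗ[R] M} {W : Submodule R M} [Module.Finite R W]
    (hmaps : MapsTo f W W) (hsurj : SurjOn f W W) : InjOn f W := by
  have hres : Function.Surjective (f.restrict hmaps) := by
    rintro ⟨y, hy⟩
    obtain ⟨x, hx, rfl⟩ := hsurj hy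
    exact ⟨⟨x, hx⟩, rfl⟩
  intro x hx y hy hxy
  exact congrArg Subtype.val <| OrzechProperty.injective_of_surjective_endomorphism _ hres
    (a₁ := ⟨x, hx⟩) (a₂ := ⟨y, hy⟩) (Subtype.ext hxy)

theorem LinearMap.rank_map_eq_of_injOn {R : Type u} {M N : Type v} [Ring R]
    [AddCommGroup M] [Module R M] [AddCommGroup N] [Module R N] {f : M →ₗ[R] N}
    {V : Submodule R M} (hf : InjOn f V) :
    Module.rank R (V.map f) = Module.rank R V :=
  le_antisymm (rank_map_le f V)
    ((f.submoduleMap V).rank_le_of_injective (f.submoduleMap_injective_of_injOn hf))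

section Distraction

variable {n : ℕ} {K : Type*} [Field K] {L : Fin n → ℕ → MvPolynomial (Fin n) K}

variable (n K L) in
def distrLinearMap : MvPolynomial (Fin n) K →ₗ[K] MvPolynomial (Fin n) K :=
  Finsupp.linearCombination K (distrMon n K L) ∘ₗ
    (AddMonoidAlgebra.coeffLinearEquiv K).toLinearMap

@[simp]
theorem coe_distrLinearMap : ⇑(distrLinearMap n K L) = distr n K L := rfl

theorem distr_add (f g : MvPolynomial (Fin n) K) :
    distr n K L (f + g) = distr n K L f + distr n K L g :=
  map_add (distrLinearMap n K L) f g

theorem distr_monomial (d : Fin n →₀ ℕ) (c : K) :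
    distr n K L (monomial d c) = c • distrMon n K L d :=
  Finsupp.linearCombination_single K c d

theorem distrMon_zero : distrMon n K L 0 = 1 := by
  simp [distrMon]

theorem distrMon_add_single (t : Fin n →₀ ℕ) (i : Fin n) :
    distrMon n K L (t + Finsupp.single i 1) = L i (t i + 1) * distrMon n K L t := by
  have hrow (j : Fin n) :
      ∏ k ∈ Finset.range ((t + Finsupp.single i 1 : Fin n →₀ ℕ) j), L j (k + 1) =
        (Pi.mulSingle i (L i (t i + 1)) : Fin n → MvPolynomial (Fin n) K) j *
          ∏ k ∈ Finset.range (t j), L j (k + 1) := by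
    rcases eq_or_ne j i with rfl | hji
    · simp [Finset.prod_range_succ, mul_comm]
    · simp [hji, Finsupp.single_eq_of_ne hji]
  simp only [distrMon, hrow, Finset.prod_mul_distrib, Fintype.prod_pi_mulSingle']

theorem distrMon_isHomogeneous (hL : ∀ i j, (L i j).IsHomogeneous 1) (d : Fin n →₀ ℕ) :
    (distrMon n K L d).IsHomogeneous d.degree := by
  rw [Finsupp.degree_eq_sum]
  refine IsHomogeneous.prod _ _ _ fun i _ => ?_
  simpa using IsHomogeneous.prod (Finset.range (d i)) _ (fun _ => 1) fun j _ => hL i (j + 1)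

theorem distr_mem_homogeneousSubmodule (hL : ∀ i j, (L i j).IsHomogeneous 1) {e : ℕ}
    {f : MvPolynomial (Fin n) K} (hf : f ∈ homogeneousSubmodule (Fin n) K e) :
    distr n K L f ∈ homogeneousSubmodule (Fin n) K e := by
  refine Submodule.sum_mem _ fun d hd => Submodule.smul_mem _ _ ?_
  have hd : d.degree = e := by
    rw [Finsupp.degree_eq_weight_one]
    exact hf (mem_support_iff.mp hd)
  rw [mem_homogeneousSubmodule, ← hd]
  exact distrMon_isHomogeneous hL d

theorem distr_homogeneousComponent (hL : ∀ i j, (L i j).IsHomogeneous 1) (e : ℕ)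
    (f : MvPolynomial (Fin n) K) :
    distr n K L (homogeneousComponent e f) = homogeneousComponent e (distr n K L f) := by
  induction f using MvPolynomial.induction_on' with
  | monomial d c =>
    rw [distr_monomial, map_smul,
      homogeneousComponent_of_mem (isHomogeneous_monomial c rfl),
      homogeneousComponent_of_mem (distrMon_isHomogeneous hL d)]
    split_ifs
    · exact distr_monomial d c
    · rw [smul_zero]
      exact map_zero (distrLinearMap n K L)
  | add p q hp hq => rw [map_add, distr_add, distr_add, hp, hq, map_add]

theorem distrMon_mul_X_mem_span
    (hL : ∀ js : Fin n → ℕ, ∀ k : Fin n,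
      (X k : MvPolynomial (Fin n) K) ∈ Submodule.span K (range fun i => L i (js i)))
    (t : Fin n →₀ ℕ) (k : Fin n) :
    distrMon n K L t * X k ∈ Submodule.span K (range (distrMon n K L)) := by
  have h := Submodule.mem_map_of_mem (f := LinearMap.mulLeft K (distrMon n K L t))
    (hL (fun i => t i + 1) k)
  rw [Submodule.map_span] at h
  refine Submodule.span_mono ?_ h
  rintro _ ⟨_, ⟨i, rfl⟩, rfl⟩
  exact ⟨t + Finsupp.single i 1, by rw [distrMon_add_single, LinearMap.mulLeft_apply, mul_comm]⟩

theorem span_range_distrMon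
    (hL : ∀ js : Fin n → ℕ, ∀ k : Fin n,
      (X k : MvPolynomial (Fin n) K) ∈ Submodule.span K (range fun i => L i (js i))) :
    Submodule.span K (range (distrMon n K L)) = ⊤ := by
  set S := Submodule.span K (range (distrMon n K L))
  have hS_mul_X (k : Fin n) : S ≤ S.comap (LinearMap.mulRight K (X k)) :=
    Submodule.span_le.mpr <| by
      rintro _ ⟨t, rfl⟩
      exact distrMon_mul_X_mem_span hL t k
  refine Submodule.eq_top_iff'.mpr fun f => ?_
  induction f using MvPolynomial.induction_on with
  | C a =>
    rw [C_eq_smul_one, ← distrMon_zero (L := L)]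
    exact Submodule.smul_mem _ a (Submodule.subset_span ⟨0, rfl⟩)
  | add p q hp hq => exact S.add_mem hp hq
  | mul_X p k hp => exact hS_mul_X k hp

theorem distr_surjective
    (hL : ∀ js : Fin n → ℕ, ∀ k : Fin n,
      (X k : MvPolynomial (Fin n) K) ∈ Submodule.span K (range fun i => L i (js i))) :
    Function.Surjective (distr n K L) := by
  rw [← coe_distrLinearMap, ← LinearMap.range_eq_top, eq_top_iff, ← span_range_distrMon hL,
    Submodule.span_le]
  rintro _ ⟨d, rfl⟩
  exact ⟨monomial d 1, by rw [coe_distrLinearMap, distr_monomial, one_smul]⟩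

theorem distr_surjOn_homogeneousSubmodule (hL : IsDistractionMatrix n K L) (e : ℕ) :
    SurjOn (distr n K L) (homogeneousSubmodule (Fin n) K e)
      (homogeneousSubmodule (Fin n) K e) := by
  intro g hg
  obtain ⟨f, rfl⟩ := distr_surjective hL.2.1 g
  refine ⟨homogeneousComponent e f, homogeneousComponent_mem e f, ?_⟩
  rw [distr_homogeneousComponent hL.1, homogeneousComponent_eq_self hg]

theorem distrSub_eq_map (V : Submodule K (MvPolynomial (Fin n) K)) :
    distrSub n K L V = V.map (distrLinearMap n K L) := by
  rw [distrSub, ← coe_distrLinearMap, Submodule.span_image, Submodule.span_eq]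

end Distraction

theorem distr_bijOn_homogeneous_general (n : ℕ) (K : Type*) [Field K]
    (L : Fin n → ℕ → MvPolynomial (Fin n) K) (hL : IsDistractionMatrix n K L) :
    (∀ d : ℕ,
      Set.BijOn (distr n K L) (homogeneousSubmodule (Fin n) K d)
        (homogeneousSubmodule (Fin n) K d)) ∧
    (∀ d : ℕ, ∀ V : Submodule K (MvPolynomial (Fin n) K),
      V ≤ homogeneousSubmodule (Fin n) K d →
        Module.rank K V = Module.rank K (distrSub n K L V)) := by
  have hmaps (e : ℕ) : MapsTo (distr n K L) (homogeneousSubmodule (Fin n) K e)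
      (homogeneousSubmodule (Fin n) K e) :=
    fun _ hf => distr_mem_homogeneousSubmodule hL.1 hf
  have hinj (e : ℕ) : InjOn (distr n K L) (homogeneousSubmodule (Fin n) K e) :=
    LinearMap.injOn_of_surjOn (f := distrLinearMap n K L) (hmaps e)
      (distr_surjOn_homogeneousSubmodule hL e)
  refine ⟨fun e => ⟨hmaps e, hinj e, distr_surjOn_homogeneousSubmodule hL e⟩,
    fun e V hV => ?_⟩
  rw [distrSub_eq_map, LinearMap.rank_map_eq_of_injOn ((hinj e).mono hV)]

/-- `D_L` restricts to a bijection of `P_d` for every `d`, and consequently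
preserves the dimension of every subspace `V ⊆ P_d`. -/
theorem distr_bijOn_homogeneous (n : ℕ) (K : Type*) [Field K] [Infinite K]
    (L : Fin n → ℕ → MvPolynomial (Fin n) K) (hL : IsDistractionMatrix n K L) :
    (∀ d : ℕ,
      Set.BijOn (distr n K L) (homogeneousSubmodule (Fin n) K d)
        (homogeneousSubmodule (Fin n) K d)) ∧
    (∀ d : ℕ, ∀ V : Submodule K (MvPolynomial (Fin n) K),
      V ≤ homogeneousSubmodule (Fin n) K d →
        Module.rank K V = Module.rank K (distrSub n K L V)) :=
  distr_bijOn_homogeneous_general n K L hL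
end
end

section
/- Let $\mathcal{L}$ be a distraction matrix and $I$ a monomial ideal of $P$. Then $I$ and $D_{\mathcal{L}}(I)$ have the same Hilbert function: $\dim_K I_d = \dim_K (D_{\mathcal{L}}(I))_d$ for all $d$. -/
open MvPolynomial

noncomputable section
namespace DistrAux

variable {n : ℕ} {K : Type*} [Field K] (L : Fin n → ℕ → MvPolynomial (Fin n) K)

lemma degree_eq_sum (α : Fin n →₀ ℕ) : α.degree = ∑ i, α i := by
  rw [Finsupp.degree]
  exact Finset.sum_subset (Finset.subset_univ _)
    (fun i _ hi => Finsupp.notMem_support_iff.mp hi)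

lemma distrMon_isHomogeneous (hL1 : ∀ i j, (L i j).IsHomogeneous 1) (α : Fin n →₀ ℕ) :
    (distrMon n K L α).IsHomogeneous α.degree := by
  rw [degree_eq_sum]
  rw [show (∑ i, α i) = ∑ i, ∑ _j ∈ Finset.range (α i), 1 by simp]
  exact MvPolynomial.IsHomogeneous.prod _ _ _ fun i _ =>
    MvPolynomial.IsHomogeneous.prod _ _ _ fun j _ => hL1 i (j + 1)

lemma distr_sum_subset (f : MvPolynomial (Fin n) K) {T : Finset (Fin n →₀ ℕ)}
    (hT : f.support ⊆ T) :
    distr n K L f = ∑ d ∈ T, coeff d f • distrMon n K L d := by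
  rw [distr]
  exact Finset.sum_subset hT (by
    intro d _ hd
    rw [MvPolynomial.notMem_support_iff.mp hd, zero_smul])

lemma distr_add (f g : MvPolynomial (Fin n) K) :
    distr n K L (f + g) = distr n K L f + distr n K L g := by
  rw [distr_sum_subset L (f + g) (T := f.support ∪ g.support)
      (fun d hd => MvPolynomial.support_add hd),
    distr_sum_subset L f (T := f.support ∪ g.support) Finset.subset_union_left,
    distr_sum_subset L g (T := f.support ∪ g.support) Finset.subset_union_right,
    ← Finset.sum_add_distrib]
  exact Finset.sum_congr rfl fun d _ => by rw [coeff_add, add_smul]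

lemma distr_smul (c : K) (f : MvPolynomial (Fin n) K) :
    distr n K L (c • f) = c • distr n K L f := by
  rw [distr_sum_subset L (c • f) (T := f.support) (MvPolynomial.support_smul),
    distr, Finset.smul_sum]
  exact Finset.sum_congr rfl fun d _ => by
    rw [MvPolynomial.coeff_smul, smul_eq_mul, mul_smul]

/-- `distr` as a `K`-linear map. -/
def Dl : MvPolynomial (Fin n) K →ₗ[K] MvPolynomial (Fin n) K where
  toFun := distr n K L
  map_add' := distr_add L
  map_smul' := distr_smul L

@[simp] lemma Dl_apply (f : MvPolynomial (Fin n) K) : Dl L f = distr n K L f := rfl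

lemma distr_monomial (α : Fin n →₀ ℕ) (c : K) :
    distr n K L (monomial α c) = c • distrMon n K L α := by
  classical
  by_cases hc : c = 0
  · simp [hc, distr]
  · rw [distr, MvPolynomial.support_monomial, if_neg hc, Finset.sum_singleton,
      MvPolynomial.coeff_monomial, if_pos rfl]

lemma degree_add_single (α : Fin n →₀ ℕ) (i : Fin n) :
    (α + Finsupp.single i 1).degree = α.degree + 1 := by
  classical
  simp [degree_eq_sum, Finsupp.add_apply, Finsupp.single_apply, Finset.sum_add_distrib,
    Finset.sum_ite_eq]

lemma distrMon_add_single (α : Fin n →₀ ℕ) (i : Fin n) :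
    distrMon n K L (α + Finsupp.single i 1) = L i (α i + 1) * distrMon n K L α := by
  classical
  have h2 : ∀ i' ∈ Finset.univ.erase i,
      (∏ j ∈ Finset.range ((α + Finsupp.single i 1 : Fin n →₀ ℕ) i'), L i' (j + 1))
        = ∏ j ∈ Finset.range (α i'), L i' (j + 1) := by
    intro i' hi'
    have hne : i' ≠ i := (Finset.mem_erase.mp hi').1
    have h : ((α + Finsupp.single i 1 : Fin n →₀ ℕ)) i' = α i' := by
      simp [Finsupp.add_apply, Finsupp.single_apply, Ne.symm hne]
    rw [h]
  have key : ∀ β : Fin n →₀ ℕ, distrMon n K L β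
      = (∏ j ∈ Finset.range (β i), L i (j + 1)) *
        ∏ i' ∈ Finset.univ.erase i, ∏ j ∈ Finset.range (β i'), L i' (j + 1) :=
    fun β => (Finset.mul_prod_erase Finset.univ
      (fun i' => ∏ j ∈ Finset.range (β i'), L i' (j + 1)) (Finset.mem_univ i)).symm
  have h1 : ((α + Finsupp.single i 1 : Fin n →₀ ℕ)) i = α i + 1 := by
    simp [Finsupp.add_apply, Finsupp.single_apply]
  rw [key (α + Finsupp.single i 1), key α, Finset.prod_congr rfl h2, h1,
    Finset.prod_range_succ]
  ring

/-- The span of the distractions of the monomials of degree `d`. -/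
def W (d : ℕ) : Submodule K (MvPolynomial (Fin n) K) :=
  Submodule.span K (distrMon n K L '' {α | α.degree = d})

lemma X_mul_distrMon_mem
    (hspan : ∀ js : Fin n → ℕ, ∀ k : Fin n,
      (X k : MvPolynomial (Fin n) K) ∈ Submodule.span K (Set.range fun i => L i (js i)))
    (k : Fin n) {d : ℕ} {α : Fin n →₀ ℕ} (hα : α.degree = d) :
    X k * distrMon n K L α ∈ W L (d + 1) := by
  obtain ⟨c, hc⟩ := (Submodule.mem_span_range_iff_exists_fun K).mp (hspan (fun i => α i + 1) k)
  rw [← hc, Finset.sum_mul]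
  refine Submodule.sum_mem _ fun i _ => ?_
  rw [smul_mul_assoc]
  refine Submodule.smul_mem _ _ (Submodule.subset_span ?_)
  exact ⟨α + Finsupp.single i 1, by rw [Set.mem_setOf_eq, degree_add_single, hα],
    distrMon_add_single L α i⟩

lemma homog_le_W (hL1 : ∀ i j, (L i j).IsHomogeneous 1)
    (hspan : ∀ js : Fin n → ℕ, ∀ k : Fin n,
      (X k : MvPolynomial (Fin n) K) ∈ Submodule.span K (Set.range fun i => L i (js i)))
    (d : ℕ) : homogeneousSubmodule (Fin n) K d ≤ W L d := by
  induction d with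
  | zero =>
    intro p hp
    have h0 : p = C (coeff 0 p) := by
      have h := homogeneousComponent_of_mem (m := 0) hp
      rw [if_pos rfl] at h
      conv_lhs => rw [← h, homogeneousComponent_zero]
    have h1 : p = coeff 0 p • distrMon n K L 0 := by
      rw [show distrMon n K L 0 = 1 by simp [distrMon], smul_eq_C_mul, mul_one]
      exact h0
    rw [h1]
    refine Submodule.smul_mem _ _ (Submodule.subset_span ⟨0, ?_, rfl⟩)
    simp [degree_eq_sum]
  | succ d ih =>
    intro p hp
    have hrep := (mem_homogeneousSubmodule _ _).mp hp
    nth_rewrite 1 [MvPolynomial.as_sum p]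
    refine Submodule.sum_mem _ fun β hβ => ?_
    have hdβ : β.degree = d + 1 := by
      have := hrep (MvPolynomial.mem_support_iff.mp hβ)
      rw [Finsupp.degree_eq_weight_one]; exact this
    have hβne : ∃ i : Fin n, β i ≠ 0 := by
      by_contra h
      push_neg at h
      have : β.degree = 0 := by simp [degree_eq_sum, h]
      omega
    obtain ⟨i, hi⟩ := hβne
    set β' : Fin n →₀ ℕ := β - Finsupp.single i 1 with hβ'
    have hrec : β' + Finsupp.single i 1 = β := by
      ext i'
      by_cases h : i' = i
      · subst h
        simp [hβ', Finsupp.single_apply]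
        omega
      · simp [hβ', Finsupp.single_apply, Ne.symm h]
    have hdβ' : β'.degree = d := by
      have := degree_add_single β' i
      rw [hrec, hdβ] at this
      omega
    have hmem : monomial β' 1 ∈ W L d := by
      exact ih ((mem_homogeneousSubmodule _ _).mpr (isHomogeneous_monomial _ hdβ'))
    have key : ∀ g ∈ W L d, X i * g ∈ W L (d + 1) := by
      intro g hg
      induction hg using Submodule.span_induction with
      | mem x hx =>
        obtain ⟨α, hα, rfl⟩ := hx
        exact X_mul_distrMon_mem L hspan i hα
      | zero => rw [mul_zero]; exact Submodule.zero_mem _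
      | add x y _ _ hx hy => rw [mul_add]; exact Submodule.add_mem _ hx hy
      | smul c x _ hx => rw [mul_smul_comm]; exact Submodule.smul_mem _ _ hx
    have hXmul : X i * monomial β' 1 = monomial β (1 : K) := by
      rw [← hrec, add_comm β' (Finsupp.single i 1), monomial_single_add, pow_one]
    have hsm : monomial β (coeff β p) = coeff β p • monomial β (1 : K) := by
      rw [MvPolynomial.smul_monomial, smul_eq_mul, mul_one]
    rw [hsm, ← hXmul]
    exact Submodule.smul_mem _ _ (key _ hmem)

lemma Dl_mem_homog (hL1 : ∀ i j, (L i j).IsHomogeneous 1) {d : ℕ}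
    {f : MvPolynomial (Fin n) K} (hf : f ∈ homogeneousSubmodule (Fin n) K d) :
    Dl L f ∈ homogeneousSubmodule (Fin n) K d := by
  rw [Dl_apply, distr]
  refine Submodule.sum_mem _ fun α hα => Submodule.smul_mem _ _ ?_
  have hdeg : α.degree = d := by
    have := (mem_homogeneousSubmodule _ _).mp hf (MvPolynomial.mem_support_iff.mp hα)
    rw [Finsupp.degree_eq_weight_one]; exact this
  exact (mem_homogeneousSubmodule _ _).mpr (hdeg ▸ distrMon_isHomogeneous L hL1 α)

lemma map_Dl_homog (hL1 : ∀ i j, (L i j).IsHomogeneous 1)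
    (hspan : ∀ js : Fin n → ℕ, ∀ k : Fin n,
      (X k : MvPolynomial (Fin n) K) ∈ Submodule.span K (Set.range fun i => L i (js i)))
    (d : ℕ) :
    Submodule.map (Dl L) (homogeneousSubmodule (Fin n) K d)
      = homogeneousSubmodule (Fin n) K d := by
  apply le_antisymm
  · rintro _ ⟨f, hf, rfl⟩
    exact Dl_mem_homog L hL1 hf
  · intro p hp
    refine Submodule.span_le.mpr ?_ (homog_le_W L hL1 hspan d hp)
    rintro _ ⟨α, hα, rfl⟩
    exact ⟨monomial α 1, (mem_homogeneousSubmodule _ _).mpr (isHomogeneous_monomial _ hα),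
      by rw [Dl_apply, distr_monomial, one_smul]⟩

lemma homog_fd (d : ℕ) :
    FiniteDimensional K ↥(homogeneousSubmodule (Fin n) K d) :=
  Submodule.finiteDimensional_of_le (S₂ := restrictTotalDegree (Fin n) K d)
    (fun p hp => (mem_restrictTotalDegree _ _ _).mpr
      ((mem_homogeneousSubmodule _ _).mp hp).totalDegree_le)

lemma hc_Dl (hL1 : ∀ i j, (L i j).IsHomogeneous 1) (e : ℕ) (f : MvPolynomial (Fin n) K) :
    homogeneousComponent e (Dl L f) = Dl L (homogeneousComponent e f) := by
  classical
  calc homogeneousComponent e (Dl L f)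
      = ∑ α ∈ f.support, coeff α f •
          (if e = α.degree then distrMon n K L α else 0) := by
        rw [Dl_apply, distr, map_sum]
        refine Finset.sum_congr rfl fun α _ => ?_
        rw [LinearMap.map_smul, homogeneousComponent_of_mem
          ((mem_homogeneousSubmodule _ _).mpr (distrMon_isHomogeneous L hL1 α))]
    _ = ∑ α ∈ f.support,
          (if α.degree = e then coeff α f • distrMon n K L α else 0) := by
        refine Finset.sum_congr rfl fun α _ => ?_
        by_cases h : α.degree = e
        · rw [if_pos h.symm, if_pos h]
        · rw [if_neg (fun hh => h hh.symm), if_neg h, smul_zero]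
    _ = Dl L (homogeneousComponent e f) := by
        rw [homogeneousComponent_apply, map_sum, ← Finset.sum_filter]
        refine Finset.sum_congr rfl fun α _ => ?_
        rw [Dl_apply, distr_monomial]

lemma Dl_injective (hL1 : ∀ i j, (L i j).IsHomogeneous 1)
    (hspan : ∀ js : Fin n → ℕ, ∀ k : Fin n,
      (X k : MvPolynomial (Fin n) K) ∈ Submodule.span K (Set.range fun i => L i (js i))) :
    Function.Injective (Dl L) := by
  have hker : ∀ d : ℕ, ∀ f ∈ homogeneousSubmodule (Fin n) K d, Dl L f = 0 → f = 0 := by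
    intro d
    haveI := homog_fd (K := K) (n := n) d
    set E : homogeneousSubmodule (Fin n) K d →ₗ[K] homogeneousSubmodule (Fin n) K d :=
      (Dl L).restrict (fun x hx => Dl_mem_homog L hL1 hx) with hE
    have hsurj : Function.Surjective E := by
      rintro ⟨y, hy⟩
      obtain ⟨x, hx, hxy⟩ := (map_Dl_homog L hL1 hspan d).ge hy
      exact ⟨⟨x, hx⟩, Subtype.ext hxy⟩
    have hinj : Function.Injective E := LinearMap.injective_iff_surjective.mpr hsurj
    intro f hf h0
    have h1 : E ⟨f, hf⟩ = E 0 := by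
      apply Subtype.ext
      simp only [hE, LinearMap.restrict_apply, map_zero]
      exact h0
    have h2 := hinj h1
    simpa using congrArg Subtype.val h2
  have hzero : ∀ f, Dl L f = 0 → f = 0 := by
    intro f h0
    have hcomp : ∀ e : ℕ, homogeneousComponent e f = 0 := by
      intro e
      apply hker e _ (homogeneousComponent_mem e f)
      rw [← hc_Dl L hL1, h0, map_zero]
    rw [← sum_homogeneousComponent f]
    exact Finset.sum_eq_zero fun i _ => hcomp i
  intro a b hab
  have := hzero (a - b) (by rw [map_sub, hab, sub_self])
  exact sub_eq_zero.mp this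
attribute [local instance] MvPolynomial.gradedAlgebra

lemma decompose_eq_hc (f : MvPolynomial (Fin n) K) (d : ℕ) :
    ((DirectSum.decompose (homogeneousSubmodule (Fin n) K) f d :
        homogeneousSubmodule (Fin n) K d) : MvPolynomial (Fin n) K)
      = homogeneousComponent d f :=
  MvPolynomial.decomposition.decompose'_apply f d

lemma hc_mem_of_monomialIdeal {I : Ideal (MvPolynomial (Fin n) K)}
    (hI : IsMonomialIdeal n K I) {f : MvPolynomial (Fin n) K} (hf : f ∈ I) (d : ℕ) :
    homogeneousComponent d f ∈ I := by
  obtain ⟨S, rfl⟩ := hI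
  have hhom : Ideal.IsHomogeneous (homogeneousSubmodule (Fin n) K)
      (Ideal.span ((fun d => monomial d (1 : K)) '' S)) :=
    Ideal.homogeneous_span _ _ (by
      rintro x ⟨a, _, rfl⟩
      exact ⟨a.degree, (mem_homogeneousSubmodule _ _).mpr (isHomogeneous_monomial _ rfl)⟩)
  have h := hhom d hf
  rwa [decompose_eq_hc] at h

end DistrAux

/-- a monomial ideal `I` and its distraction `D_L(I)` have the same Hilbert
function: `dim_K I_d = dim_K (D_L(I))_d` for all `d`. -/
theorem distr_hilbertFunction (n : ℕ) (K : Type*) [Field K] [Infinite K]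
    (L : Fin n → ℕ → MvPolynomial (Fin n) K) (hL : IsDistractionMatrix n K L)
    (I : Ideal (MvPolynomial (Fin n) K)) (hI : IsMonomialIdeal n K I) :
    ∀ d : ℕ,
      Module.rank K
          ↥(Submodule.restrictScalars K I ⊓ homogeneousSubmodule (Fin n) K d) =
        Module.rank K
          ↥(Submodule.span K (distr n K L '' I) ⊓ homogeneousSubmodule (Fin n) K d) := by
  obtain ⟨hL1, hspan, -⟩ := hL
  intro d
  have hinj := DistrAux.Dl_injective L hL1 hspan
  have hspan_eq : Submodule.span K (distr n K L '' ↑I)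
      = Submodule.map (DistrAux.Dl L) (Submodule.restrictScalars K I) := by
    have himg : distr n K L '' ↑I
        = ↑(Submodule.map (DistrAux.Dl L) (Submodule.restrictScalars K I)) := by
      rw [Submodule.map_coe]
      rfl
    rw [himg, Submodule.span_eq]
  have hkey : Submodule.map (DistrAux.Dl L) (Submodule.restrictScalars K I)
        ⊓ homogeneousSubmodule (Fin n) K d
      = Submodule.map (DistrAux.Dl L)
          (Submodule.restrictScalars K I ⊓ homogeneousSubmodule (Fin n) K d) := by
    apply le_antisymm
    · intro u hu
      obtain ⟨hu1, hu2⟩ := Submodule.mem_inf.mp hu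
      obtain ⟨f, hfI, rfl⟩ := Submodule.mem_map.mp hu1
      have h1 : DistrAux.Dl L (homogeneousComponent d f) = DistrAux.Dl L f := by
        rw [← DistrAux.hc_Dl L hL1 d f, homogeneousComponent_of_mem hu2, if_pos rfl]
      refine Submodule.mem_map.mpr ⟨homogeneousComponent d f, Submodule.mem_inf.mpr
        ⟨?_, homogeneousComponent_mem d f⟩, h1⟩
      exact DistrAux.hc_mem_of_monomialIdeal hI hfI d
    · rintro _ ⟨f, hf, rfl⟩
      obtain ⟨hfI, hfd⟩ := Submodule.mem_inf.mp hf
      exact Submodule.mem_inf.mpr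
        ⟨Submodule.mem_map_of_mem hfI, DistrAux.Dl_mem_homog L hL1 hfd⟩
  rw [hspan_eq, hkey]
  exact (Submodule.equivMapOfInjective (DistrAux.Dl L) hinj
    (Submodule.restrictScalars K I ⊓ homogeneousSubmodule (Fin n) K d)).rank_eq
end
end

section
/- Let $r \le n$, let $t_1,\dots,t_r$ be monomials in $K[x_1,\dots,x_n]$ and $\alpha_1,\dots,\alpha_r$ nonnegative integers with: $t_1 = 1$; $m(t_j) < j$ for $j = 2,\dots,r$ (where $m(t)$ is the largest index of a variable dividing $t$); $t_j \mid t_{j+1}$; and $\deg t_j + \alpha_j \le \deg t_{j+1} + \alpha_{j+1}$ for $1 \le j < r$. Then the ideal $I = \sum_{j=1}^r t_j (x_1,\dots,x_j)^{\alpha_j}$ is a stable monomial ideal. -/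
open MvPolynomial

noncomputable section
/-- The stable exchange property: for every monomial `x^d ∈ I` with maximal variable index
`j` (i.e. `x_j ∣ x^d` and no larger variable divides `x^d`) and every `i ≤ j`,
`x_i · x^d / x_j ∈ I`.  (Smaller index = larger variable.) -/
def StableMoves (n : ℕ) (K : Type*) [Field K]
    (I : Ideal (MvPolynomial (Fin n) K)) : Prop :=
  ∀ d : Fin n →₀ ℕ, monomial d (1 : K) ∈ I →
    ∀ j : Fin n, d j ≠ 0 → (∀ k : Fin n, j < k → d k = 0) →
      ∀ i : Fin n, i ≤ j →
        monomial (d - Finsupp.single j 1 + Finsupp.single i 1) (1 : K) ∈ I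

/-- The linear segment ideal `(x_1, …, x_m)` (`0`-indexed: variables of index `< m`). -/
def segIdeal (n : ℕ) (K : Type*) [Field K] (m : ℕ) :
    Ideal (MvPolynomial (Fin n) K) :=
  Ideal.span {p | ∃ i : Fin n, (i : ℕ) < m ∧ p = X i}

section Aux
open Pointwise

variable {n : ℕ} {K : Type*} [Field K]

lemma aux_sum_single_one (i : Fin n) : ∑ k, (Finsupp.single i 1 : Fin n →₀ ℕ) k = 1 := by
  simp [Finsupp.single_apply]

/-- Membership in a set-power of the segment generators. -/
lemma aux_mem_seg_pow (m a : ℕ) (p : MvPolynomial (Fin n) K) :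
    p ∈ ({p : MvPolynomial (Fin n) K | ∃ i : Fin n, (i : ℕ) < m ∧ p = X i} ^ a) ↔
      ∃ e : Fin n →₀ ℕ, (∀ k, e k ≠ 0 → (k : ℕ) < m) ∧ (∑ i, e i) = a ∧
        p = monomial e (1 : K) := by
  induction a generalizing p with
  | zero =>
    simp only [pow_zero, Set.mem_one]
    constructor
    · rintro rfl
      exact ⟨0, by simp, by simp, by simp [monomial_zero']⟩
    · rintro ⟨e, -, hsum, rfl⟩
      have : e = 0 := by
        ext k
        have := Finset.sum_eq_zero_iff.mp hsum k (Finset.mem_univ k)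
        simpa using this
      simp [this, monomial_zero']
  | succ a ih =>
    rw [pow_succ, Set.mem_mul]
    constructor
    · rintro ⟨q, hq, x, ⟨i, him, rfl⟩, rfl⟩
      obtain ⟨e, hsupp, hsum, rfl⟩ := ih q |>.mp hq
      refine ⟨e + Finsupp.single i 1, ?_, ?_, ?_⟩
      · intro k hk
        rcases Nat.eq_zero_or_pos (e k) with h0 | h0
        · have : Finsupp.single i 1 k ≠ 0 := by
            simpa [Finsupp.add_apply, h0] using hk
          have : k = i := by
            by_contra hne
            simp [Finsupp.single_apply, Ne.symm hne] at this
          subst this; exact him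
        · exact hsupp k (Nat.pos_iff_ne_zero.mp h0)
      · rw [Finset.sum_congr rfl (fun k _ => Finsupp.add_apply e (Finsupp.single i 1) k),
          Finset.sum_add_distrib, hsum, aux_sum_single_one]
      · rw [X, monomial_mul, mul_one]
    · rintro ⟨e, hsupp, hsum, rfl⟩
      have hex : ∃ i : Fin n, e i ≠ 0 := by
        by_contra h
        push_neg at h
        simp [Finset.sum_eq_zero (fun k _ => h k)] at hsum
      obtain ⟨i, hi⟩ := hex
      have hei : 1 ≤ e i := Nat.one_le_iff_ne_zero.mpr hi
      have key : ∀ k, ((e - Finsupp.single i 1 : Fin n →₀ ℕ)) k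
          + (Finsupp.single i 1 : Fin n →₀ ℕ) k = e k := by
        intro k
        rw [Finsupp.tsub_apply, Finsupp.single_apply]
        split_ifs with h
        · subst h; omega
        · omega
      refine ⟨monomial (e - Finsupp.single i 1) (1 : K), ?_, X i, ⟨i, hsupp i hi, rfl⟩, ?_⟩
      · refine (ih _).mpr ⟨e - Finsupp.single i 1, ?_, ?_, rfl⟩
        · intro k hk
          apply hsupp k
          intro h0
          rw [Finsupp.tsub_apply, h0] at hk
          simp at hk
        · have := Finset.sum_congr rfl (fun k (_ : k ∈ Finset.univ) => key k)
          rw [Finset.sum_add_distrib, aux_sum_single_one, hsum] at this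
          omega
      · rw [X, monomial_mul, mul_one]
        have he : (e - Finsupp.single i 1) + Finsupp.single i 1 = e := by
          ext k
          rw [Finsupp.add_apply]
          exact key k
        rw [he]

/-- The generating monomial exponents of the `j`-th summand. -/
def auxGen (tt : Fin n →₀ ℕ) (m a : ℕ) : Set (Fin n →₀ ℕ) :=
  {d | ∃ e : Fin n →₀ ℕ, (∀ k, e k ≠ 0 → (k : ℕ) < m) ∧ (∑ i, e i) = a ∧ d = tt + e}

lemma aux_summand_eq (tt : Fin n →₀ ℕ) (m a : ℕ) :
    Ideal.span {monomial tt (1 : K)} * segIdeal n K m ^ a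
      = Ideal.span ((fun d => monomial d (1 : K)) '' auxGen tt m a) := by
  rw [segIdeal,
    show (Ideal.span {p : MvPolynomial (Fin n) K | ∃ i : Fin n, (i : ℕ) < m ∧ p = X i}) ^ a
      = Ideal.span ({p : MvPolynomial (Fin n) K | ∃ i : Fin n, (i : ℕ) < m ∧ p = X i} ^ a)
      from Submodule.span_pow _ _, Ideal.span_mul_span']
  congr 1
  ext p
  rw [Set.mem_mul]
  constructor
  · rintro ⟨x, hx, q, hq, rfl⟩
    obtain ⟨e, hsupp, hsum, rfl⟩ := (aux_mem_seg_pow m a q).mp hq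
    rw [Set.mem_singleton_iff] at hx
    subst hx
    exact ⟨tt + e, ⟨e, hsupp, hsum, rfl⟩, by rw [monomial_mul, mul_one]⟩
  · rintro ⟨d, ⟨e, hsupp, hsum, rfl⟩, rfl⟩
    exact ⟨monomial tt 1, rfl, monomial e 1,
      (aux_mem_seg_pow m a _).mpr ⟨e, hsupp, hsum, rfl⟩, by rw [monomial_mul, mul_one]⟩

/-- Cut-off degree: total degree in the first `m` variables. -/
def auxCut (m : ℕ) (d : Fin n →₀ ℕ) : ℕ :=
  ∑ k ∈ Finset.univ.filter (fun k : Fin n => (k : ℕ) < m), d k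

lemma aux_cut_eq_sum (m : ℕ) (d : Fin n →₀ ℕ) (h : ∀ k : Fin n, ¬ (k : ℕ) < m → d k = 0) :
    auxCut m d = ∑ k, d k := by
  refine Finset.sum_subset (Finset.subset_univ _) ?_
  intro k _ hk
  exact h k (by simpa using hk)

/-- Choosing a sub-finsupp of prescribed total degree supported in a finset. -/
lemma aux_choose (F : Finset (Fin n)) :
    ∀ (a : ℕ) (c : Fin n →₀ ℕ), a ≤ ∑ k ∈ F, c k →
      ∃ e : Fin n →₀ ℕ, (∀ k, e k ≠ 0 → k ∈ F) ∧ (∑ i, e i) = a ∧ e ≤ c := by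
  intro a
  induction a with
  | zero => exact fun c _ => ⟨0, by simp, by simp, by simp⟩
  | succ a ih =>
    intro c hc
    have hex : ∃ k ∈ F, c k ≠ 0 := by
      by_contra h
      push_neg at h
      rw [Finset.sum_eq_zero (fun k hk => h k hk)] at hc
      omega
    obtain ⟨k, hkF, hk⟩ := hex
    have hck : 1 ≤ c k := Nat.one_le_iff_ne_zero.mpr hk
    have key : ∀ j, ((c - Finsupp.single k 1 : Fin n →₀ ℕ)) j
        + (Finsupp.single k 1 : Fin n →₀ ℕ) j = c j := by
      intro j
      rw [Finsupp.tsub_apply, Finsupp.single_apply]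
      split_ifs with h
      · subst h; omega
      · omega
    have hsum' : (∑ j ∈ F, ((c - Finsupp.single k 1 : Fin n →₀ ℕ)) j) + 1 = ∑ j ∈ F, c j := by
      have h5 := Finset.sum_congr rfl (fun j (_ : j ∈ F) => key j)
      rw [Finset.sum_add_distrib] at h5
      have e1 : ∑ x ∈ F, (Finsupp.single k 1 : Fin n →₀ ℕ) x = 1 :=
        (Finset.sum_eq_single_of_mem k hkF (fun j _ hne => by
          rw [Finsupp.single_apply, if_neg (fun h => hne h.symm)])).trans
          (by rw [Finsupp.single_apply, if_pos rfl])
      rw [e1] at h5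
      exact h5
    obtain ⟨e, hsupp, hsum, hle⟩ := ih (c - Finsupp.single k 1) (by omega)
    refine ⟨e + Finsupp.single k 1, ?_, ?_, ?_⟩
    · intro j hj
      rcases Nat.eq_zero_or_pos (e j) with h0 | h0
      · have : Finsupp.single k 1 j ≠ 0 := by simpa [Finsupp.add_apply, h0] using hj
        have : j = k := by
          by_contra hne
          simp [Finsupp.single_apply, Ne.symm hne] at this
        subst this; exact hkF
      · exact hsupp j (Nat.pos_iff_ne_zero.mp h0)
    · rw [Finset.sum_congr rfl (fun j _ => Finsupp.add_apply e (Finsupp.single k 1) j),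
        Finset.sum_add_distrib, hsum, aux_sum_single_one]
    · rw [Finsupp.le_def]
      intro j
      have h1 := Finsupp.le_def.mp hle j
      rw [Finsupp.tsub_apply, Finsupp.single_apply] at h1
      rw [Finsupp.add_apply, Finsupp.single_apply]
      split_ifs at h1 ⊢ with h
      · subst h; omega
      · omega

/-- A monomial `x^d` lies in the `j`-th summand iff `t ∣ x^d` and there is enough extra
degree among the first `m` variables. -/
lemma aux_mem_gen_iff (tt : Fin n →₀ ℕ) (m a : ℕ)
    (hsuppt : ∀ k : Fin n, tt k ≠ 0 → (k : ℕ) < m) (d : Fin n →₀ ℕ) :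
    (∃ s ∈ auxGen tt m a, s ≤ d) ↔ tt ≤ d ∧ a + ∑ i, tt i ≤ auxCut m d := by
  constructor
  · rintro ⟨s, ⟨e, hsupp, hsum, rfl⟩, hle⟩
    have hpt := Finsupp.le_def.mp hle
    simp only [Finsupp.add_apply] at hpt
    constructor
    · exact Finsupp.le_def.mpr fun k => le_trans (Nat.le_add_right _ _) (hpt k)
    · have h1 : auxCut m tt + auxCut m e ≤ auxCut m d := by
        rw [auxCut, auxCut, auxCut, ← Finset.sum_add_distrib]
        exact Finset.sum_le_sum (fun k _ => hpt k)
      have h2 : auxCut m tt = ∑ i, tt i :=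
        aux_cut_eq_sum m tt (fun k hk => by by_contra h0; exact hk (hsuppt k h0))
      have h3 : auxCut m e = ∑ i, e i :=
        aux_cut_eq_sum m e (fun k hk => by by_contra h0; exact hk (hsupp k h0))
      omega
  · rintro ⟨hle, hdeg⟩
    have hpt := Finsupp.le_def.mp hle
    have hsub : ∀ j ∈ Finset.univ.filter (fun k : Fin n => (k : ℕ) < m),
        (d - tt) j + tt j = d j := by
      intro j _
      rw [Finsupp.tsub_apply]
      have := hpt j
      omega
    have hsum1 : ∑ j ∈ Finset.univ.filter (fun k : Fin n => (k : ℕ) < m), (d - tt) j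
        + auxCut m tt = auxCut m d := by
      rw [auxCut, auxCut, ← Finset.sum_add_distrib]
      exact Finset.sum_congr rfl hsub
    have h2 : auxCut m tt = ∑ i, tt i :=
      aux_cut_eq_sum m tt (fun k hk => by by_contra h0; exact hk (hsuppt k h0))
    obtain ⟨e, hsupp, hsum, hle'⟩ := aux_choose
      (Finset.univ.filter (fun k : Fin n => (k : ℕ) < m)) a (d - tt) (by omega)
    refine ⟨tt + e, ⟨e, fun k hk => by simpa using hsupp k hk, hsum, rfl⟩, ?_⟩
    rw [Finsupp.le_def]
    intro k
    have h1 := Finsupp.le_def.mp hle' k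
    rw [Finsupp.tsub_apply] at h1
    have := hpt k
    simp only [Finsupp.add_apply]
    omega

end Aux

/-- with `t_1 = 1`, `m(t_j) < j`, `t_j ∣ t_{j+1}` and
`deg t_j + α_j ≤ deg t_{j+1} + α_{j+1}`, the ideal
`I = ∑_{j=1}^r t_j (x_1,…,x_j)^{α_j}` is a stable monomial ideal.
(Here `j : Fin r` is the `0`-based index, so `(x_1,…,x_j)` is `segIdeal n K (j+1)`.) -/
theorem sum_seg_powers_stable (n : ℕ) (K : Type*) [Field K]
    (r : ℕ) (hr : r ≤ n) (t : Fin r → (Fin n →₀ ℕ)) (α : Fin r → ℕ)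
    (hm : ∀ j : Fin r, ∀ k : Fin n, t j k ≠ 0 → (k : ℕ) < (j : ℕ))
    (hdvd : ∀ (j : Fin r) (h : (j : ℕ) + 1 < r), t j ≤ t ⟨(j : ℕ) + 1, h⟩)
    (hdeg : ∀ (j : Fin r) (h : (j : ℕ) + 1 < r),
      (∑ i, t j i) + α j ≤ (∑ i, t ⟨(j : ℕ) + 1, h⟩ i) + α ⟨(j : ℕ) + 1, h⟩)
    (I : Ideal (MvPolynomial (Fin n) K))
    (hI : I = ∑ j : Fin r,
      Ideal.span {monomial (t j) (1 : K)} * segIdeal n K ((j : ℕ) + 1) ^ (α j)) :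
    IsMonomialIdeal n K I ∧ StableMoves n K I := by
  -- the global generating set
  set S : Set (Fin n →₀ ℕ) := ⋃ j : Fin r, auxGen (t j) ((j : ℕ) + 1) (α j) with hS
  have hIeq : I = Ideal.span ((fun d => monomial d (1 : K)) '' S) := by
    rw [hI, hS, Set.image_iUnion, Ideal.span_iUnion]
    rw [Ideal.sum_eq_sup, Finset.sup_univ_eq_iSup]
    exact iSup_congr fun j => aux_summand_eq (t j) ((j : ℕ) + 1) (α j)
  -- membership criterion
  have hmem : ∀ d : Fin n →₀ ℕ, monomial d (1 : K) ∈ I ↔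
      ∃ j : Fin r, t j ≤ d ∧ α j + ∑ i, t j i ≤ auxCut ((j : ℕ) + 1) d := by
    intro d
    rw [hIeq, mem_ideal_span_monomial_image]
    have hsupp : (monomial d (1 : K)).support = {d} := by
      classical
      rw [support_monomial, if_neg (one_ne_zero)]
    rw [hsupp]
    simp only [Finset.mem_singleton, forall_eq]
    constructor
    · rintro ⟨s, hsS, hle⟩
      rw [hS, Set.mem_iUnion] at hsS
      obtain ⟨j, hj⟩ := hsS
      exact ⟨j, (aux_mem_gen_iff (t j) _ (α j)
        (fun k hk => Nat.lt_succ_of_lt (hm j k hk)) d).mp ⟨s, hj, hle⟩⟩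
    · rintro ⟨j, hj⟩
      obtain ⟨s, hs, hle⟩ := (aux_mem_gen_iff (t j) _ (α j)
        (fun k hk => Nat.lt_succ_of_lt (hm j k hk)) d).mpr hj
      refine ⟨s, ?_, hle⟩
      rw [hS]
      exact Set.mem_iUnion.mpr ⟨j, hs⟩
  refine ⟨⟨S, hIeq⟩, ?_⟩
  -- chain lemmas
  have hchain : ∀ (a b : ℕ) (hb : b < r) (hab : a ≤ b),
      t ⟨a, lt_of_le_of_lt hab hb⟩ ≤ t ⟨b, hb⟩ ∧
      (∑ i, t ⟨a, lt_of_le_of_lt hab hb⟩ i) + α ⟨a, lt_of_le_of_lt hab hb⟩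
        ≤ (∑ i, t ⟨b, hb⟩ i) + α ⟨b, hb⟩ := by
    intro a b
    induction b with
    | zero =>
      intro hb hab
      have ha0 : a = 0 := Nat.le_zero.mp hab
      subst ha0
      exact ⟨le_refl _, le_refl _⟩
    | succ b ihb =>
      intro hb hab
      rcases Nat.lt_or_ge a (b + 1) with h | h
      · have hb' : b < r := by omega
        have hab' : a ≤ b := by omega
        obtain ⟨h1, h2⟩ := ihb hb' hab'
        have h3 := hdvd ⟨b, hb'⟩ hb
        have h4 := hdeg ⟨b, hb'⟩ hb
        exact ⟨le_trans h1 h3, le_trans h2 h4⟩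
      · have : a = b + 1 := by omega
        subst this
        exact ⟨le_refl _, le_refl _⟩
  -- stability
  intro d hd m hm0 hmax i hi
  obtain ⟨j, h1, h2⟩ := (hmem d).mp hd
  rw [hmem]
  set d' : Fin n →₀ ℕ := d - Finsupp.single m 1 + Finsupp.single i 1 with hd'
  have hd'app : ∀ k : Fin n, d' k =
      d k - (if m = k then 1 else 0) + (if i = k then 1 else 0) := by
    intro k
    simp [hd', Finsupp.add_apply, Finsupp.tsub_apply, Finsupp.single_apply]
  have hdm : 1 ≤ d m := Nat.one_le_iff_ne_zero.mpr hm0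
  have h1pt := Finsupp.le_def.mp h1
  rcases eq_or_ne i m with rfl | hine
  · -- i = m : d' = d
    have : d' = d := by
      ext k
      rw [hd'app k]
      rcases eq_or_ne i k with rfl | hne
      · simp; omega
      · simp [hne]
    rw [this]
    exact ⟨j, h1, h2⟩
  · have hilt : (i : ℕ) < (m : ℕ) := lt_of_le_of_ne (by exact_mod_cast hi)
      (fun h => hine (Fin.ext h))
    rcases Nat.lt_or_ge (j : ℕ) (m : ℕ) with hc1 | hc2
    · -- case m(x^d) beyond segment: keep j
      refine ⟨j, ?_, ?_⟩
      · rw [Finsupp.le_def]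
        intro k
        rw [hd'app k]
        rcases eq_or_ne m k with rfl | hne
        · have : t j m = 0 := by
            by_contra h0
            have := hm j m h0
            omega
          simp [this]
        · have := h1pt k
          simp [hne]
          omega
      · refine le_trans h2 ?_
        rw [auxCut, auxCut]
        refine Finset.sum_le_sum ?_
        intro k hk
        rw [Finset.mem_filter] at hk
        have hne : m ≠ k := by
          intro h
          subst h
          omega
        rw [hd'app k, if_neg hne]
        split_ifs <;> omega
    · -- case m within segment
      have hsuppd : ∀ k : Fin n, ¬ (k : ℕ) ≤ (m : ℕ) → d k = 0 := by
        intro k hk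
        exact hmax k (by exact_mod_cast (by omega : (m : ℕ) < (k : ℕ)))
      have hcutd : auxCut ((j : ℕ) + 1) d = ∑ k, d k :=
        aux_cut_eq_sum _ d (fun k hk => hsuppd k (by omega))
      have hsuppd' : ∀ k : Fin n, ¬ (k : ℕ) ≤ (m : ℕ) → d' k = 0 := by
        intro k hk
        have h3 : m ≠ k := by
          intro h
          subst h
          omega
        have h4 : i ≠ k := by
          intro h; subst h; omega
        rw [hd'app k, hsuppd k hk]
        simp [h3, h4]
      have hdegd' : ∑ k, d' k = ∑ k, d k := by
        have key : ∀ k : Fin n, d' k + (if m = k then 1 else 0)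
            = d k + (if i = k then 1 else 0) := by
          intro k
          rw [hd'app k]
          rcases eq_or_ne m k with rfl | hne
          · have h4 : i ≠ m := hine
            simp [h4]
            omega
          · simp [hne]
        have hs := Finset.sum_congr rfl (fun k (_ : k ∈ Finset.univ) => key k)
        rw [Finset.sum_add_distrib, Finset.sum_add_distrib] at hs
        have e1 : ∑ k : Fin n, (if m = k then 1 else 0) = 1 := by
          rw [Finset.sum_ite_eq Finset.univ m (fun _ => 1), if_pos (Finset.mem_univ m)]
        have e2 : ∑ k : Fin n, (if i = k then 1 else 0) = 1 := by
          rw [Finset.sum_ite_eq Finset.univ i (fun _ => 1), if_pos (Finset.mem_univ i)]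
        omega
      rcases Nat.lt_or_ge (t j m) (d m) with hB | hB
      · -- t j m < d m : keep j
        refine ⟨j, ?_, ?_⟩
        · rw [Finsupp.le_def]
          intro k
          rw [hd'app k]
          have := h1pt k
          rcases eq_or_ne m k with rfl | hne
          · have h4 : i ≠ m := hine
            simp [h4]
            omega
          · simp [hne]
            omega
        · have hcutd' : auxCut ((j : ℕ) + 1) d' = ∑ k, d' k :=
            aux_cut_eq_sum _ d' (fun k hk => hsuppd' k (by omega))
          rw [hcutd'] at *
          omega
      · -- t j m = d m ≠ 0 : move to index m
        have htjm : t j m ≠ 0 := by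
          have := h1pt m
          omega
        have hmj : (m : ℕ) < (j : ℕ) := hm j m htjm
        have hmr : (m : ℕ) < r := lt_trans hmj j.isLt
        set j' : Fin r := ⟨(m : ℕ), hmr⟩ with hj'
        obtain ⟨hch1, hch2⟩ := hchain (m : ℕ) (j : ℕ) j.isLt (le_of_lt hmj)
        have hch1' : t j' ≤ t j := hch1
        have hch2' : (∑ i, t j' i) + α j' ≤ (∑ i, t j i) + α j := hch2
        have hch1pt := Finsupp.le_def.mp hch1'
        refine ⟨j', ?_, ?_⟩
        · rw [Finsupp.le_def]
          intro k
          rw [hd'app k]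
          have ha := hch1pt k
          have hb := h1pt k
          rcases eq_or_ne m k with rfl | hne
          · have : t j' m = 0 := by
              by_contra h0
              have := hm j' m h0
              simp [hj'] at this
            simp [this]
          · rw [if_neg hne]
            split_ifs <;> omega
        · have hcutd' : auxCut ((j' : ℕ) + 1) d' = ∑ k, d' k := by
            refine aux_cut_eq_sum _ d' (fun k hk => hsuppd' k ?_)
            simp [hj'] at hk ⊢
            omega
          rw [hcutd', hdegd']
          rw [hcutd] at h2
          omega

end
end

section
/- For a monomial $t = x_1^{\alpha_1} x_2^{\alpha_2}\cdots x_n^{\alpha_n}$, the smallest strongly stable ideal containing $t$ is $\mathrm{SStable}(t) = \bigcap_{i=1}^n (x_1,\dots,x_i)^{\beta_i}$, where $\beta_i = \sum_{j=1}^i \alpha_j$. -/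
open MvPolynomial

noncomputable section
section Aux
variable {n : ℕ} {K : Type*} [Field K]

lemma sum_single_finset (s : Finset (Fin n)) (j : Fin n) (c : ℕ) :
    ∑ k ∈ s, (Finsupp.single j c) k = if j ∈ s then c else 0 := by
  simp [Finsupp.single_apply, Finset.sum_ite_eq s j fun _ => c]

lemma sum_move (α : Fin n →₀ ℕ) (i j : Fin n) (hj : α j ≠ 0) (s : Finset (Fin n)) :
    ∑ k ∈ s, ((α - Finsupp.single j 1 + Finsupp.single i 1 : Fin n →₀ ℕ)) k
      = ∑ k ∈ s, α k - (if j ∈ s then 1 else 0) + (if i ∈ s then 1 else 0) := by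
  simp only [Finsupp.add_apply, Finsupp.tsub_apply]
  rw [Finset.sum_add_distrib,
    Finset.sum_tsub_distrib s (fun x _ => by
      rcases eq_or_ne j x with rfl | hne
      · simpa [Finsupp.single_apply] using Nat.one_le_iff_ne_zero.mpr hj
      · simp [Finsupp.single_apply, hne]),
    sum_single_finset, sum_single_finset]

lemma one_le_sum_of_mem {α : Fin n →₀ ℕ} {j : Fin n} (hj : α j ≠ 0) {s : Finset (Fin n)}
    (hjs : j ∈ s) : 1 ≤ ∑ k ∈ s, α k :=
  le_trans (Nat.one_le_iff_ne_zero.mpr hj) (Finset.single_le_sum (fun _ _ => Nat.zero_le _) hjs)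

lemma monomial_mem_segIdeal_pow (m : ℕ) : ∀ (β : ℕ) (e : Fin n →₀ ℕ),
    β ≤ (∑ k ∈ Finset.univ.filter (fun k : Fin n => (k : ℕ) < m), e k) →
    monomial e (1 : K) ∈ segIdeal n K m ^ β := by
  intro β
  induction β with
  | zero => intro e _; simp
  | succ β ih =>
    intro e he
    have hne : (∑ k ∈ Finset.univ.filter (fun k : Fin n => (k : ℕ) < m), e k) ≠ 0 := by omega
    obtain ⟨j, hjmem, hj⟩ := Finset.exists_ne_zero_of_sum_ne_zero hne
    have hjm : (j : ℕ) < m := (Finset.mem_filter.mp hjmem).2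
    have hble : Finsupp.single j 1 ≤ e := Finsupp.single_le_iff.mpr (Nat.one_le_iff_ne_zero.mpr hj)
    have hsum : β ≤ ∑ k ∈ Finset.univ.filter (fun k : Fin n => (k : ℕ) < m),
        ((e - Finsupp.single j 1 : Fin n →₀ ℕ)) k := by
      simp only [Finsupp.tsub_apply]
      rw [Finset.sum_tsub_distrib _ (fun x _ => by
          rcases eq_or_ne j x with rfl | hne'
          · simpa [Finsupp.single_apply] using Nat.one_le_iff_ne_zero.mpr hj
          · simp [Finsupp.single_apply, hne']),
        sum_single_finset, if_pos hjmem]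
      omega
    have heq : monomial e (1 : K) = monomial (e - Finsupp.single j 1) (1 : K) * X j := by
      rw [show (X j : MvPolynomial (Fin n) K) = monomial (Finsupp.single j 1) 1 from rfl, monomial_mul, one_mul, tsub_add_cancel_of_le hble]
    rw [heq, pow_succ]
    exact Ideal.mul_mem_mul (ih _ hsum) (Ideal.subset_span ⟨j, hjm, rfl⟩)

lemma mem_span_M_iff (m β : ℕ) (p : MvPolynomial (Fin n) K) :
    p ∈ Ideal.span ((fun e => monomial e (1 : K)) ''
        {e : Fin n →₀ ℕ | β ≤ ∑ k ∈ Finset.univ.filter (fun k : Fin n => (k : ℕ) < m), e k}) ↔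
      ∀ xi ∈ p.support, β ≤ ∑ k ∈ Finset.univ.filter (fun k : Fin n => (k : ℕ) < m), xi k := by
  rw [mem_ideal_span_monomial_image]
  constructor
  · intro h xi hxi
    obtain ⟨e, he, hle⟩ := h xi hxi
    exact le_trans he (Finset.sum_le_sum fun k _ => hle k)
  · intro h xi hxi
    exact ⟨xi, h xi hxi, le_rfl⟩

lemma segIdeal_eq_span_image (m : ℕ) :
    segIdeal n K m = Ideal.span ((fun e => monomial e (1 : K)) ''
      {e : Fin n →₀ ℕ | ∃ i : Fin n, (i : ℕ) < m ∧ e = Finsupp.single i 1}) := by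
  unfold segIdeal
  congr 1
  ext p
  constructor
  · rintro ⟨i, him, rfl⟩
    exact ⟨Finsupp.single i 1, ⟨i, him, rfl⟩, rfl⟩
  · rintro ⟨e, ⟨i, him, rfl⟩, rfl⟩
    exact ⟨i, him, rfl⟩

lemma support_of_mem_segIdeal {m : ℕ} {s : MvPolynomial (Fin n) K} (hs : s ∈ segIdeal n K m) :
    ∀ v ∈ s.support, 1 ≤ ∑ k ∈ Finset.univ.filter (fun k : Fin n => (k : ℕ) < m), v k := by
  rw [segIdeal_eq_span_image, mem_ideal_span_monomial_image] at hs
  intro v hv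
  obtain ⟨e, ⟨i, him, rfl⟩, hle⟩ := hs v hv
  calc (1 : ℕ) = ∑ k ∈ Finset.univ.filter (fun k : Fin n => (k : ℕ) < m),
        (Finsupp.single i 1) k := by
        rw [sum_single_finset, if_pos (by simpa using him)]
    _ ≤ _ := Finset.sum_le_sum fun k _ => hle k

lemma segIdeal_pow_eq (m β : ℕ) :
    segIdeal n K m ^ β =
      Ideal.span ((fun e => monomial e (1 : K)) ''
        {e : Fin n →₀ ℕ | β ≤ ∑ k ∈ Finset.univ.filter (fun k : Fin n => (k : ℕ) < m), e k}) := by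
  apply le_antisymm
  · induction β with
    | zero =>
      rw [pow_zero, Ideal.one_eq_top]
      refine top_le_iff.mpr ((Ideal.eq_top_iff_one _).mpr ?_)
      have h0 : monomial (0 : Fin n →₀ ℕ) (1 : K) ∈
          Ideal.span ((fun e => monomial e (1 : K)) ''
            {e : Fin n →₀ ℕ | 0 ≤ ∑ k ∈ Finset.univ.filter (fun k : Fin n => (k : ℕ) < m), e k}) :=
        Ideal.subset_span ⟨0, Nat.zero_le _, rfl⟩
      simpa using h0
    | succ β ih =>
      rw [pow_succ]
      refine Ideal.mul_le.mpr fun r hr s hs => ?_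
      rw [mem_span_M_iff]
      intro xi hxi
      obtain ⟨u, hu, v, hv, rfl⟩ := Finset.mem_add.mp (support_mul r s hxi)
      have hdu : β ≤ ∑ k ∈ Finset.univ.filter (fun k : Fin n => (k : ℕ) < m), u k :=
        (mem_span_M_iff m β r).mp (ih hr) u hu
      have hdv := support_of_mem_segIdeal hs v hv
      have : ∑ k ∈ Finset.univ.filter (fun k : Fin n => (k : ℕ) < m), (u + v) k
          = (∑ k ∈ Finset.univ.filter (fun k : Fin n => (k : ℕ) < m), u k)
            + ∑ k ∈ Finset.univ.filter (fun k : Fin n => (k : ℕ) < m), v k := by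
        simp [Finsupp.add_apply, Finset.sum_add_distrib]
      omega
  · rw [Ideal.span_le]
    rintro p ⟨e, he, rfl⟩
    exact monomial_mem_segIdeal_pow m β e he

lemma monomial_mem_span_image_iff {S : Set (Fin n →₀ ℕ)}
    (hup : ∀ e d : Fin n →₀ ℕ, e ∈ S → e ≤ d → d ∈ S) (d : Fin n →₀ ℕ) :
    monomial d (1 : K) ∈ Ideal.span ((fun e => monomial e (1 : K)) '' S) ↔ d ∈ S := by
  rw [mem_ideal_span_monomial_image]
  constructor
  · intro h
    obtain ⟨e, heS, hle⟩ := h d (by simp [support_monomial])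
    exact hup e d heS hle
  · intro hd xi hxi
    have : d = xi := by simpa [support_monomial] using hxi
    exact ⟨d, hd, le_of_eq this⟩


/-- partial sum up to index `i` -/
def psum (d : Fin n →₀ ℕ) (i : Fin n) : ℕ :=
  ∑ k ∈ Finset.univ.filter (fun k : Fin n => (k : ℕ) ≤ (i : ℕ)), d k

lemma filter_le_eq (i : Fin n) :
    (Finset.univ.filter (fun k : Fin n => (k : ℕ) < (i : ℕ) + 1)) =
      Finset.univ.filter (fun k : Fin n => (k : ℕ) ≤ (i : ℕ)) := by
  apply Finset.filter_congr
  intro k _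
  simp [Nat.lt_succ_iff]

lemma inf_eq_span (a : Fin n → ℕ) :
    (⨅ i : Fin n,
        segIdeal n K ((i : ℕ) + 1) ^
          (∑ k ∈ Finset.univ.filter fun k : Fin n => (k : ℕ) ≤ (i : ℕ), a k)) =
      Ideal.span ((fun e => monomial e (1 : K)) ''
        {d : Fin n →₀ ℕ | ∀ i : Fin n,
          (∑ k ∈ Finset.univ.filter fun k : Fin n => (k : ℕ) ≤ (i : ℕ), a k) ≤
            ∑ k ∈ Finset.univ.filter (fun k : Fin n => (k : ℕ) ≤ (i : ℕ)), d k}) := by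
  apply le_antisymm
  · intro p hp
    rw [Ideal.mem_iInf] at hp
    rw [mem_ideal_span_monomial_image]
    intro xi hxi
    refine ⟨xi, ?_, le_rfl⟩
    intro i
    have h := hp i
    rw [segIdeal_pow_eq, mem_span_M_iff] at h
    have := h xi hxi
    rwa [filter_le_eq] at this
  · refine le_iInf fun i => ?_
    rw [segIdeal_pow_eq, Ideal.span_le]
    rintro p ⟨d, hd, rfl⟩
    refine Ideal.subset_span ⟨d, ?_, rfl⟩
    simp only [Set.mem_setOf_eq]
    rw [filter_le_eq]
    exact hd i

lemma key_lower (J : Ideal (MvPolynomial (Fin n) K))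
    (hJ : ∀ d : Fin n →₀ ℕ, monomial d (1 : K) ∈ J →
      ∀ i j : Fin n, i ≤ j → d j ≠ 0 →
        monomial (d - Finsupp.single j 1 + Finsupp.single i 1) (1 : K) ∈ J) :
    ∀ (N : ℕ) (α d : Fin n →₀ ℕ),
      (∑ k : Fin n, (α k - d k)) ≤ N →
      monomial α (1 : K) ∈ J →
      (∀ i : Fin n,
        (∑ k ∈ Finset.univ.filter fun k : Fin n => (k : ℕ) ≤ (i : ℕ), α k) ≤
          ∑ k ∈ Finset.univ.filter (fun k : Fin n => (k : ℕ) ≤ (i : ℕ)), d k) →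
      monomial d (1 : K) ∈ J := by
  intro N
  induction N with
  | zero =>
    intro α d hN hα _
    have hle : α ≤ d := by
      intro k
      have := Finset.sum_eq_zero_iff.mp (Nat.le_zero.mp hN) k (Finset.mem_univ k)
      omega
    have hmon : monomial d (1 : K) = monomial (d - α) (1 : K) * monomial α (1 : K) := by
      rw [monomial_mul, one_mul, tsub_add_cancel_of_le hle]
    rw [hmon]
    exact Ideal.mul_mem_left _ _ hα
  | succ N ih =>
    intro α d hN hα hdom
    by_cases h0 : (∑ k : Fin n, (α k - d k)) = 0
    · exact ih α d (by omega) hα hdom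
    · obtain ⟨j, hj⟩ : ∃ j : Fin n, d j < α j := by
        obtain ⟨j, _, hj⟩ := Finset.exists_ne_zero_of_sum_ne_zero h0
        exact ⟨j, by omega⟩
      -- partial sums split at j
      have hins : (Finset.univ.filter (fun k : Fin n => (k : ℕ) ≤ (j : ℕ))) =
          insert j (Finset.univ.filter (fun k : Fin n => (k : ℕ) < (j : ℕ))) := by
        ext k
        simp only [Finset.mem_filter, Finset.mem_univ, true_and, Finset.mem_insert,
          Fin.ext_iff]
        omega
      have hjnot : j ∉ Finset.univ.filter (fun k : Fin n => (k : ℕ) < (j : ℕ)) := by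
        simp
      have hltj : (∑ k ∈ Finset.univ.filter (fun k : Fin n => (k : ℕ) < (j : ℕ)), α k) <
          ∑ k ∈ Finset.univ.filter (fun k : Fin n => (k : ℕ) < (j : ℕ)), d k := by
        have := hdom j
        rw [hins, Finset.sum_insert hjnot, Finset.sum_insert hjnot] at this
        omega
      -- the finset of candidate i's
      set F : Finset (Fin n) :=
        Finset.univ.filter (fun k : Fin n => (k : ℕ) < (j : ℕ) ∧ α k < d k) with hF
      have hFne : F.Nonempty := by
        by_contra hemp
        rw [Finset.not_nonempty_iff_eq_empty] at hemp
        have : ∀ k ∈ Finset.univ.filter (fun k : Fin n => (k : ℕ) < (j : ℕ)), d k ≤ α k := by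
          intro k hk
          by_contra hlt
          have : k ∈ F := by
            simp only [hF, Finset.mem_filter, Finset.mem_univ, true_and]
            exact ⟨(Finset.mem_filter.mp hk).2, by omega⟩
          rw [hemp] at this
          exact absurd this (Finset.notMem_empty k)
        exact absurd (Finset.sum_le_sum this) (by omega)
      set i : Fin n := F.max' hFne with hi
      have hiF : i ∈ F := F.max'_mem hFne
      have hij : (i : ℕ) < (j : ℕ) := (Finset.mem_filter.mp hiF).2.1
      have hid : α i < d i := (Finset.mem_filter.mp hiF).2.2
      have himax : ∀ k : Fin n, (k : ℕ) < (j : ℕ) → α k < d k → (k : ℕ) ≤ (i : ℕ) := by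
        intro k hk1 hk2
        exact F.le_max' k (by
          simp only [hF, Finset.mem_filter, Finset.mem_univ, true_and]
          exact ⟨hk1, hk2⟩)
      have hαj : α j ≠ 0 := by omega
      set α' : Fin n →₀ ℕ := α - Finsupp.single j 1 + Finsupp.single i 1 with hα'
      have hα'mem : monomial α' (1 : K) ∈ J :=
        hJ α hα i j (Fin.le_def.mpr (le_of_lt hij)) hαj
      have hij' : i ≠ j := fun h => by rw [h] at hij; omega
      have hji' : j ≠ i := fun h => hij' h.symm
      -- pointwise values of α'
      have hval_j : α' j = α j - 1 := by
        simp [hα', Finsupp.single_apply, hij', hji']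
      have hval_i : α' i = α i + 1 := by
        have h1 : 1 ≤ α i + (if i = i then 1 else 0) := by simp
        simp [hα', Finsupp.single_apply, hij', hji', Nat.one_le_iff_ne_zero.mpr hαj]
      have hval_other : ∀ k : Fin n, k ≠ i → k ≠ j → α' k = α k := by
        intro k hki hkj
        simp [hα', Finsupp.single_apply, Ne.symm hki, Ne.symm hkj]
      -- strict dominance for levels between i and j
      have hstrict : ∀ l : Fin n, (i : ℕ) ≤ (l : ℕ) → (l : ℕ) < (j : ℕ) →
          (∑ k ∈ Finset.univ.filter (fun k : Fin n => (k : ℕ) ≤ (l : ℕ)), α k) <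
            ∑ k ∈ Finset.univ.filter (fun k : Fin n => (k : ℕ) ≤ (l : ℕ)), d k := by
        intro l hil hlj
        have hsub : (Finset.univ.filter (fun k : Fin n => (k : ℕ) ≤ (l : ℕ))) ⊆
            Finset.univ.filter (fun k : Fin n => (k : ℕ) < (j : ℕ)) := by
          intro k hk
          simp only [Finset.mem_filter, Finset.mem_univ, true_and] at hk ⊢
          omega
        have hd_le : ∀ k ∈ (Finset.univ.filter (fun k : Fin n => (k : ℕ) < (j : ℕ))) \
            (Finset.univ.filter (fun k : Fin n => (k : ℕ) ≤ (l : ℕ))), d k ≤ α k := by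
          intro k hk
          simp only [Finset.mem_sdiff, Finset.mem_filter, Finset.mem_univ, true_and] at hk
          by_contra hlt
          have := himax k hk.1 (by omega)
          omega
        have h1 : (∑ k ∈ (Finset.univ.filter (fun k : Fin n => (k : ℕ) < (j : ℕ))) \
              (Finset.univ.filter (fun k : Fin n => (k : ℕ) ≤ (l : ℕ))), α k)
            + ∑ k ∈ Finset.univ.filter (fun k : Fin n => (k : ℕ) ≤ (l : ℕ)), α k
            = ∑ k ∈ Finset.univ.filter (fun k : Fin n => (k : ℕ) < (j : ℕ)), α k :=
          Finset.sum_sdiff hsub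
        have h2 : (∑ k ∈ (Finset.univ.filter (fun k : Fin n => (k : ℕ) < (j : ℕ))) \
              (Finset.univ.filter (fun k : Fin n => (k : ℕ) ≤ (l : ℕ))), d k)
            + ∑ k ∈ Finset.univ.filter (fun k : Fin n => (k : ℕ) ≤ (l : ℕ)), d k
            = ∑ k ∈ Finset.univ.filter (fun k : Fin n => (k : ℕ) < (j : ℕ)), d k :=
          Finset.sum_sdiff hsub
        have h3 : (∑ k ∈ (Finset.univ.filter (fun k : Fin n => (k : ℕ) < (j : ℕ))) \
              (Finset.univ.filter (fun k : Fin n => (k : ℕ) ≤ (l : ℕ))), d k)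
            ≤ ∑ k ∈ (Finset.univ.filter (fun k : Fin n => (k : ℕ) < (j : ℕ))) \
              (Finset.univ.filter (fun k : Fin n => (k : ℕ) ≤ (l : ℕ))), α k :=
          Finset.sum_le_sum hd_le
        omega
      -- dominance for α'
      have hdom' : ∀ l : Fin n,
          (∑ k ∈ Finset.univ.filter fun k : Fin n => (k : ℕ) ≤ (l : ℕ), α' k) ≤
            ∑ k ∈ Finset.univ.filter (fun k : Fin n => (k : ℕ) ≤ (l : ℕ)), d k := by
        intro l
        have hm := sum_move α i j hαj (Finset.univ.filter (fun k : Fin n => (k : ℕ) ≤ (l : ℕ)))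
        rw [← hα'] at hm
        rw [hm]
        by_cases hjl : j ∈ Finset.univ.filter (fun k : Fin n => (k : ℕ) ≤ (l : ℕ))
        · have hjl' : (j : ℕ) ≤ (l : ℕ) := by simpa using hjl
          have hil' : i ∈ Finset.univ.filter (fun k : Fin n => (k : ℕ) ≤ (l : ℕ)) := by
            simp only [Finset.mem_filter, Finset.mem_univ, true_and]
            omega
          have h1 := one_le_sum_of_mem hαj hjl
          have := hdom l
          rw [if_pos hjl, if_pos hil']
          omega
        · have hjl' : ¬ (j : ℕ) ≤ (l : ℕ) := by simpa using hjl
          rw [if_neg hjl]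
          by_cases hil : i ∈ Finset.univ.filter (fun k : Fin n => (k : ℕ) ≤ (l : ℕ))
          · have hil' : (i : ℕ) ≤ (l : ℕ) := by simpa using hil
            have := hstrict l hil' (by omega)
            rw [if_pos hil]
            omega
          · rw [if_neg hil]
            have := hdom l
            omega
      -- measure decreases
      have hmeas : (∑ k : Fin n, (α' k - d k)) ≤ N := by
        have hlt : (∑ k : Fin n, (α' k - d k)) < ∑ k : Fin n, (α k - d k) := by
          apply Finset.sum_lt_sum
          · intro k _
            rcases eq_or_ne k j with rfl | hkj
            · rw [hval_j]; omega
            · rcases eq_or_ne k i with rfl | hki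
              · rw [hval_i]; omega
              · rw [hval_other k hki hkj]
          · exact ⟨j, Finset.mem_univ j, by rw [hval_j]; omega⟩
        omega
      exact ih α' d hmeas hα'mem hdom'


end Aux

/-- for `t = x_1^{α_1} ⋯ x_n^{α_n}` and `β_i = ∑_{j ≤ i} α_j`, the smallest
strongly stable monomial ideal containing `t` is `⋂_{i=1}^n (x_1,…,x_i)^{β_i}`. -/
theorem sstable_closure_eq (n : ℕ) (K : Type*) [Field K] (a : Fin n → ℕ) :
    sInf {J : Ideal (MvPolynomial (Fin n) K) |
        IsMonomialIdeal n K J ∧ StronglyStableMoves n K J ∧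
        monomial (Finsupp.equivFunOnFinite.symm a) (1 : K) ∈ J} =
      ⨅ i : Fin n,
        segIdeal n K ((i : ℕ) + 1) ^
          (∑ k ∈ Finset.univ.filter fun k : Fin n => (k : ℕ) ≤ (i : ℕ), a k) := by
  have hup : ∀ e d : Fin n →₀ ℕ,
      e ∈ {d : Fin n →₀ ℕ | ∀ i : Fin n,
          (∑ k ∈ Finset.univ.filter fun k : Fin n => (k : ℕ) ≤ (i : ℕ), a k) ≤
            ∑ k ∈ Finset.univ.filter (fun k : Fin n => (k : ℕ) ≤ (i : ℕ)), d k} →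
      e ≤ d →
      d ∈ {d : Fin n →₀ ℕ | ∀ i : Fin n,
          (∑ k ∈ Finset.univ.filter fun k : Fin n => (k : ℕ) ≤ (i : ℕ), a k) ≤
            ∑ k ∈ Finset.univ.filter (fun k : Fin n => (k : ℕ) ≤ (i : ℕ)), d k} :=
    fun e d he hle i => le_trans (he i) (Finset.sum_le_sum fun k _ => hle k)
  apply le_antisymm
  · refine sInf_le ⟨⟨_, inf_eq_span a⟩, ?_, ?_⟩
    · intro d hd i j hij hdj
      rw [inf_eq_span a] at hd ⊢
      have hd' := (monomial_mem_span_image_iff hup d).mp hd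
      refine (monomial_mem_span_image_iff hup _).mpr ?_
      intro l
      have hm := sum_move d i j hdj (Finset.univ.filter (fun k : Fin n => (k : ℕ) ≤ (l : ℕ)))
      rw [hm]
      have hdl := hd' l
      by_cases hjl : j ∈ Finset.univ.filter (fun k : Fin n => (k : ℕ) ≤ (l : ℕ))
      · have hjl' : (j : ℕ) ≤ (l : ℕ) := by simpa using hjl
        have hil : i ∈ Finset.univ.filter (fun k : Fin n => (k : ℕ) ≤ (l : ℕ)) := by
          simp only [Finset.mem_filter, Finset.mem_univ, true_and]
          exact le_trans (Fin.le_def.mp hij) hjl'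
        have h1 := one_le_sum_of_mem hdj hjl
        rw [if_pos hjl, if_pos hil]
        omega
      · rw [if_neg hjl]
        by_cases hil : i ∈ Finset.univ.filter (fun k : Fin n => (k : ℕ) ≤ (l : ℕ))
        · rw [if_pos hil]; omega
        · rw [if_neg hil]; omega
    · rw [inf_eq_span a]
      refine Ideal.subset_span ⟨Finsupp.equivFunOnFinite.symm a, ?_, rfl⟩
      intro i
      exact le_of_eq (Finset.sum_congr rfl fun k _ => by simp)
  · refine le_sInf ?_
    rintro J ⟨-, hmov, ht⟩
    rw [inf_eq_span a, Ideal.span_le]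
    rintro p ⟨d, hd, rfl⟩
    refine key_lower J hmov
      (∑ k : Fin n, ((Finsupp.equivFunOnFinite.symm a) k - d k))
      (Finsupp.equivFunOnFinite.symm a) d le_rfl ht ?_
    intro i
    calc (∑ k ∈ Finset.univ.filter fun k : Fin n => (k : ℕ) ≤ (i : ℕ),
          (Finsupp.equivFunOnFinite.symm a) k)
        = ∑ k ∈ Finset.univ.filter fun k : Fin n => (k : ℕ) ≤ (i : ℕ), a k :=
          Finset.sum_congr rfl fun k _ => by simp
      _ ≤ _ := hd i
end
end

section
/- A monomial ideal $I \subseteq K[x_1,\dots,x_n]$ is strongly stable if and only if $I$ is a finite sum of ideals each of which is a finite intersection of powers of linear segment ideals $(x_1,\dots,x_i)$. -/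
open MvPolynomial

noncomputable section
/-!
Write `P_m d` for the exponent sum of the first `m` variables in `x^d`, and `d ≼ d'` when
`P_m d ≤ P_m d'` for every `m`. A polynomial lies in `(x_1, …, x_m)^e` iff each monomial of its
support has `e ≤ P_m`, so sums of intersections of such powers are the monomial ideals of unions
of intersections of the sets `{d | e ≤ P_m d}`; a move `x_j ↦ x_i` with `i ≤ j` never lowers a
partial degree, which gives strong stability. Conversely, `⋂_k (x_1, …, x_k)^{P_k g}` is the
monomial ideal of `{d | g ≼ d}`, and a strongly stable ideal containing `x^g` contains every such
`x^d`: while `d ≠ d'` and `d ≼ d'`, either multiplying by the last variable (if the total degrees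
differ) or a single move keeps `d ≼ d'` and strictly increases `∑_m P_m d`. Summing over finitely
many monomial generators `g` (Hilbert's basis theorem) recovers the ideal.
-/

open Finsupp

section BorelOrder

variable {n : ℕ}

def partialDegree (m : ℕ) : (Fin n →₀ ℕ) →+ ℕ :=
  degree.comp (filterAddHom fun i : Fin n => (i : ℕ) < m)

lemma partialDegree_eq_sum (m : ℕ) (d : Fin n →₀ ℕ) :
    partialDegree m d = ∑ i : Fin n, if (i : ℕ) < m then d i else 0 := by
  simp [partialDegree, filterAddHom, degree_eq_sum, filter_apply]

lemma partialDegree_single (m : ℕ) (i : Fin n) (c : ℕ) :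
    partialDegree m (single i c) = if (i : ℕ) < m then c else 0 := by
  split_ifs with h <;>
    simp [partialDegree, filterAddHom, filter_single_of_pos, filter_single_of_neg, h]

lemma partialDegree_zero (d : Fin n →₀ ℕ) : partialDegree 0 d = 0 := by
  simp [partialDegree_eq_sum]

lemma partialDegree_succ (k : Fin n) (d : Fin n →₀ ℕ) :
    partialDegree (k + 1) d = partialDegree k d + d k := by
  rw [partialDegree_eq_sum, partialDegree_eq_sum, ← Fintype.sum_ite_eq' k d,
    ← Finset.sum_add_distrib]
  refine Finset.sum_congr rfl fun i _ => ?_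
  have := Fin.val_inj (a := i) (b := k)
  split_ifs <;> omega

lemma partialDegree_eq_degree {m : ℕ} {d : Fin n →₀ ℕ} (h : ∀ i, d i ≠ 0 → (i : ℕ) < m) :
    partialDegree m d = d.degree :=
  congrArg degree ((filter_eq_self_iff (f := d) (p := fun i : Fin n => (i : ℕ) < m)).mpr h)

lemma partialDegree_of_le {m : ℕ} (hm : n ≤ m) (d : Fin n →₀ ℕ) : partialDegree m d = d.degree :=
  partialDegree_eq_degree fun i _ => i.2.trans_le hm

lemma partialDegree_mono (m : ℕ) : Monotone (partialDegree (n := n) m) := by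
  intro a b hab
  obtain ⟨c, rfl⟩ := le_iff_exists_add.mp hab
  simp

lemma partialDegree_shift {d : Fin n →₀ ℕ} {i j : Fin n} (hj : d j ≠ 0) (m : ℕ) :
    partialDegree m (d - single j 1 + single i 1) + (if (j : ℕ) < m then 1 else 0) =
      partialDegree m d + (if (i : ℕ) < m then 1 else 0) := by
  conv_rhs => rw [← tsub_add_cancel_of_le (single_le_iff.mpr (Nat.one_le_iff_ne_zero.mpr hj))]
  simp only [map_add, partialDegree_single]
  omega

def BorelLE (d d' : Fin n →₀ ℕ) : Prop := ∀ m, partialDegree m d ≤ partialDegree m d'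

def IsStronglyStableSet (U : Set (Fin n →₀ ℕ)) : Prop :=
  ∀ d ∈ U, ∀ i j : Fin n, i ≤ j → d j ≠ 0 → d - single j 1 + single i 1 ∈ U

def borelWeight (d : Fin n →₀ ℕ) : ℕ := ∑ m ∈ Finset.range (n + 1), partialDegree m d

lemma borelLE_of_le {d d' : Fin n →₀ ℕ} (h : d ≤ d') : BorelLE d d' :=
  fun m => partialDegree_mono m h

lemma borelLE_shift {d : Fin n →₀ ℕ} {i j : Fin n} (hij : i ≤ j) (hj : d j ≠ 0) :
    BorelLE d (d - single j 1 + single i 1) := fun m => by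
  have := partialDegree_shift (i := i) hj m
  have : (i : ℕ) ≤ j := hij
  split_ifs at * <;> omega

lemma partialDegree_lt_shift {d : Fin n →₀ ℕ} {i j : Fin n} (hij : i < j) (hj : d j ≠ 0) :
    partialDegree j d < partialDegree j (d - single j 1 + single i 1) := by
  have := partialDegree_shift (i := i) hj j
  rw [if_neg (lt_irrefl _), if_pos (show (i : ℕ) < j from hij)] at this
  omega

lemma borelLE_iff_forall_succ {d d' : Fin n →₀ ℕ} :
    BorelLE d d' ↔ ∀ k : Fin n, partialDegree (k + 1) d ≤ partialDegree (k + 1) d' := by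
  refine ⟨fun h k => h _, fun h m => ?_⟩
  rcases Nat.lt_or_ge m (n + 1) with hm | hm
  · rcases m with _ | m
    · simp [partialDegree_zero]
    · exact h ⟨m, by omega⟩
  · rcases n with _ | n
    · simp [partialDegree_eq_sum]
    · simpa [partialDegree_of_le (show n + 1 ≤ m by omega), partialDegree_of_le le_rfl]
        using h (Fin.last n)

lemma eq_of_forall_partialDegree_eq {d d' : Fin n →₀ ℕ}
    (h : ∀ m, partialDegree m d = partialDegree m d') : d = d' := by
  ext k
  have := h (k + 1)
  rw [partialDegree_succ, partialDegree_succ, h k] at this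
  omega

lemma exists_partialDegree_ne_and_succ_eq {d d' : Fin n →₀ ℕ} (hdeg : d.degree = d'.degree)
    (hne : d ≠ d') : ∃ k : Fin n, partialDegree k d ≠ partialDegree k d' ∧
      partialDegree (k + 1) d = partialDegree (k + 1) d' := by
  let p (k : ℕ) := ∀ m, k ≤ m → partialDegree m d = partialDegree m d'
  have hp_of_le (k : ℕ) (hk : n ≤ k) : p k := fun m hm => by
    rw [partialDegree_of_le (hk.trans hm), partialDegree_of_le (hk.trans hm), hdeg]
  have hp0 : ¬ p 0 := fun h0 => hne (eq_of_forall_partialDegree_eq fun m => h0 m m.zero_le)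
  obtain ⟨k, hk, hk1⟩ := Nat.exists_not_and_succ_of_not_zero_of_exists hp0 ⟨n, hp_of_le n le_rfl⟩
  have hkn : k < n := not_le.mp fun hkn => hk (hp_of_le k hkn)
  refine ⟨⟨k, hkn⟩, fun hkeq => hk fun m hm => ?_, hk1 _ le_rfl⟩
  rcases hm.eq_or_lt with rfl | hm
  exacts [hkeq, hk1 m hm]

namespace BorelLE

variable {d d' : Fin n →₀ ℕ}

lemma degree_le (h : BorelLE d d') : d.degree ≤ d'.degree := by
  simpa [partialDegree_of_le le_rfl] using h n

lemma borelWeight_le (h : BorelLE d d') : borelWeight d ≤ borelWeight d' :=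
  Finset.sum_le_sum fun m _ => h m

lemma borelWeight_lt (h : BorelLE d d') {m : ℕ} (hm : m ≤ n)
    (hlt : partialDegree m d < partialDegree m d') : borelWeight d < borelWeight d' :=
  Finset.sum_lt_sum (fun m _ => h m) ⟨m, Finset.mem_range.mpr (by omega), hlt⟩

lemma exists_add_single (h : BorelLE d d') (hlt : d.degree < d'.degree) :
    ∃ i : Fin n, BorelLE (d + single i 1) d' := by
  rcases n with _ | n
  · simp [degree_eq_sum] at hlt
  refine ⟨Fin.last n, fun m => ?_⟩
  rw [map_add, partialDegree_single]
  split_ifs with hm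
  · rw [partialDegree_of_le (by simp at hm; omega), partialDegree_of_le (by simp at hm; omega)]
    omega
  · simpa using h m

lemma exists_shift (h : BorelLE d d') (hdeg : d.degree = d'.degree) (hne : d ≠ d') :
    ∃ i j : Fin n, i < j ∧ d j ≠ 0 ∧ BorelLE (d - single j 1 + single i 1) d' := by
  -- `j` is the last index with `P_j d < P_j d'`, so `d j > d' j` and moving a unit of exponent
  -- from `x_j` to `x_{j-1}` raises `P_j` only.
  obtain ⟨j, hj, hj1⟩ := exists_partialDegree_ne_and_succ_eq hdeg hne
  have hjd : partialDegree j d < partialDegree j d' := (h j).lt_of_ne hj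
  have hj0 : (j : ℕ) ≠ 0 := fun h0 => hj (by rw [h0, partialDegree_zero, partialDegree_zero])
  obtain ⟨i, hi⟩ : ∃ i : Fin n, (i : ℕ) + 1 = j := ⟨⟨j - 1, by omega⟩, by simp; omega⟩
  have hdj : d' j < d j := by
    rw [partialDegree_succ, partialDegree_succ] at hj1
    omega
  refine ⟨i, j, Fin.lt_def.mpr (by omega), by omega, fun m => ?_⟩
  have hshift := partialDegree_shift (i := i) (ne_zero_of_lt hdj) m
  rcases eq_or_ne m j with rfl | hmj
  · split_ifs at hshift <;> omega
  · have := h m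
    split_ifs at hshift <;> omega

end BorelLE

lemma IsStronglyStableSet.exists_step {U : Set (Fin n →₀ ℕ)} (hU : IsUpperSet U)
    (hstab : IsStronglyStableSet U) {d d' : Fin n →₀ ℕ} (hd : d ∈ U) (h : BorelLE d d')
    (hne : d ≠ d') : ∃ d₂ ∈ U, BorelLE d₂ d' ∧ borelWeight d < borelWeight d₂ := by
  rcases h.degree_le.lt_or_eq with hlt | heq
  · obtain ⟨i, hi⟩ := h.exists_add_single hlt
    refine ⟨d + single i 1, hU le_self_add hd, hi,
      (borelLE_of_le le_self_add).borelWeight_lt le_rfl ?_⟩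
    simp [partialDegree_single, i.2]
  · obtain ⟨i, j, hij, hj, hshift⟩ := h.exists_shift heq hne
    exact ⟨_, hstab d hd i j hij.le hj, hshift,
      (borelLE_shift hij.le hj).borelWeight_lt j.2.le (partialDegree_lt_shift hij hj)⟩

theorem IsStronglyStableSet.mem_of_borelLE {U : Set (Fin n →₀ ℕ)} (hU : IsUpperSet U)
    (hstab : IsStronglyStableSet U) {d d' : Fin n →₀ ℕ} (hd : d ∈ U) (h : BorelLE d d') :
    d' ∈ U := by
  by_cases hne : d = d'
  · exact hne ▸ hd
  obtain ⟨d₂, hd₂, h₂, hlt⟩ := hstab.exists_step hU hd h hne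
  exact hstab.mem_of_borelLE hU hd₂ h₂
termination_by borelWeight d' - borelWeight d
decreasing_by have := h₂.borelWeight_le; omega

lemma isUpperSet_le_partialDegree (m e : ℕ) :
    IsUpperSet {d : Fin n →₀ ℕ | e ≤ partialDegree m d} :=
  fun _ _ hab ha => ha.trans (partialDegree_mono m hab)

lemma isUpperSet_borelLE (c : Fin n →₀ ℕ) : IsUpperSet {d | BorelLE c d} :=
  fun _ _ hab ha m => (ha m).trans (partialDegree_mono m hab)

lemma upperClosure_range_eq_iUnion_borelLE {ι : Type*} (g : ι → Fin n →₀ ℕ)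
    (hstab : IsStronglyStableSet (upperClosure (Set.range g) : Set (Fin n →₀ ℕ))) :
    (upperClosure (Set.range g) : Set (Fin n →₀ ℕ)) = ⋃ j, {d | BorelLE (g j) d} := by
  ext d
  refine ⟨fun hd => ?_, fun hd => ?_⟩
  · obtain ⟨_, ⟨j, rfl⟩, hj⟩ := mem_upperClosure.mp hd
    exact Set.mem_iUnion.mpr ⟨j, borelLE_of_le hj⟩
  · obtain ⟨j, hj⟩ := Set.mem_iUnion.mp hd
    exact hstab.mem_of_borelLE (upperClosure _).upper (subset_upperClosure ⟨j, rfl⟩) hj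

end BorelOrder

namespace MvPolynomial

section restrictSupportIdeal

variable {σ R : Type*} [CommSemiring R]

lemma mem_restrictSupportIdeal {U : Set (σ →₀ ℕ)} {hU : IsUpperSet U} {p : MvPolynomial σ R} :
    p ∈ restrictSupportIdeal R U hU ↔ ↑p.support ⊆ U :=
  Iff.rfl

lemma monomial_one_mem_restrictSupportIdeal [Nontrivial R] {U : Set (σ →₀ ℕ)}
    {hU : IsUpperSet U} {d : σ →₀ ℕ} :
    monomial d (1 : R) ∈ restrictSupportIdeal R U hU ↔ d ∈ U := by
  classical
  simp [mem_restrictSupportIdeal, support_monomial]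

lemma span_monomial_eq_restrictSupportIdeal (S : Set (σ →₀ ℕ)) :
    Ideal.span ((monomial · (1 : R)) '' S) =
      restrictSupportIdeal R (upperClosure S : Set (σ →₀ ℕ)) (upperClosure S).upper := by
  ext p
  simp [mem_ideal_span_monomial_image, mem_restrictSupportIdeal, Set.subset_def]

lemma iInf_restrictSupportIdeal {ι : Sort*} (U : ι → Set (σ →₀ ℕ))
    (hU : ∀ i, IsUpperSet (U i)) :
    ⨅ i, restrictSupportIdeal R (U i) (hU i) =
      restrictSupportIdeal R (⋂ i, U i) (isUpperSet_iInter hU) := by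
  ext p
  simp [Submodule.mem_iInf, mem_restrictSupportIdeal]

lemma sum_restrictSupportIdeal {ι : Type*} [Fintype ι] (U : ι → Set (σ →₀ ℕ))
    (hU : ∀ i, IsUpperSet (U i)) :
    ∑ i, restrictSupportIdeal R (U i) (hU i) =
      restrictSupportIdeal R (⋃ i, U i) (isUpperSet_iUnion hU) := by
  apply le_antisymm
  · refine Finset.sum_induction _ (· ≤ restrictSupportIdeal R _ _) (fun _ _ => sup_le) bot_le
      fun i _ p hp => ?_
    exact (mem_restrictSupportIdeal.mp hp).trans (Set.subset_iUnion U i)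
  · intro p hp
    rw [p.as_sum]
    refine Ideal.sum_mem _ fun d hd => ?_
    obtain ⟨i, hi⟩ := Set.mem_iUnion.mp (hp hd)
    refine Finset.single_le_sum (f := fun i => restrictSupportIdeal R (U i) (hU i))
      (fun _ _ => zero_le) (Finset.mem_univ i) ?_
    classical
    rw [mem_restrictSupportIdeal, support_monomial]
    split_ifs <;> simp [hi]

end restrictSupportIdeal

lemma exists_fin_span_monomial_eq {σ R : Type*} [Finite σ] [CommRing R] [IsNoetherianRing R]
    (S : Set (σ →₀ ℕ)) : ∃ (s : ℕ) (g : Fin s → σ →₀ ℕ),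
      Ideal.span ((monomial · (1 : R)) '' S) = Ideal.span ((monomial · 1) '' Set.range g) := by
  have hfg : (Ideal.span ((monomial · (1 : R)) '' S)).FG := IsNoetherian.noetherian _
  obtain ⟨t, htS, ht⟩ := (Submodule.fg_span_iff_fg_span_finset_subset _).mp hfg
  obtain ⟨T, -, hT, hspan⟩ := (Set.exists_subset_image_finite_and
    (p := fun t => Ideal.span _ = Ideal.span t)).mp ⟨_, htS, t.finite_toSet, ht⟩
  obtain ⟨s, g, -, rfl⟩ := hT.fin_param
  exact ⟨s, g, hspan⟩

end MvPolynomial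

section segIdeal

variable {n : ℕ} {K : Type*} [Field K]

lemma segIdeal_eq_span_X (m : ℕ) :
    segIdeal n K m = Ideal.span (X '' {i : Fin n | (i : ℕ) < m}) := by
  unfold segIdeal
  congr 1
  ext p
  simp [eq_comm]

lemma segIdeal_pow (m e : ℕ) :
    segIdeal n K m ^ e =
      restrictSupportIdeal K {d | e ≤ partialDegree m d} (isUpperSet_le_partialDegree m e) := by
  rw [segIdeal_eq_span_X, Ideal.span, Submodule.span_pow, image_pow_eq_finsuppProd_image]
  simp only [Finsupp.prod, prod_X_pow_eq_monomial]
  rw [← Ideal.span, span_monomial_eq_restrictSupportIdeal]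
  congr 1
  ext d
  simp only [SetLike.mem_coe, mem_upperClosure, Set.mem_ofPred_eq]
  constructor
  · rintro ⟨c, ⟨rfl, hc⟩, hcd⟩
    rw [← partialDegree_eq_degree fun i hi => hc (mem_support_iff.mpr hi)]
    exact partialDegree_mono m hcd
  · intro hd
    obtain ⟨c, hc, rfl⟩ := exists_le_degree_eq (d.filter fun i : Fin n => (i : ℕ) < m) _ hd
    have hfilter : d.filter (fun i : Fin n => (i : ℕ) < m) ≤ d := fun i => by
      rw [filter_apply]; split_ifs <;> simp
    refine ⟨c, ⟨rfl, fun i hi => ?_⟩, hc.trans hfilter⟩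
    have := (support_mono hc) hi
    rw [support_filter, Finset.mem_filter] at this
    exact this.2

lemma iInf_segIdeal_pow_partialDegree (c : Fin n →₀ ℕ) :
    ⨅ k : Fin n, segIdeal n K (k + 1) ^ partialDegree (k + 1) c =
      restrictSupportIdeal K {d | BorelLE c d} (isUpperSet_borelLE c) := by
  simp only [segIdeal_pow, iInf_restrictSupportIdeal]
  congr 1
  ext d
  simp [borelLE_iff_forall_succ]

lemma stronglyStableMoves_restrictSupportIdeal_iff {U : Set (Fin n →₀ ℕ)} (hU : IsUpperSet U) :
    StronglyStableMoves n K (restrictSupportIdeal K U hU) ↔ IsStronglyStableSet U := by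
  simp only [StronglyStableMoves, monomial_one_mem_restrictSupportIdeal, IsStronglyStableSet]

end segIdeal

/-- a monomial ideal is strongly stable iff it is a finite sum of ideals,
each of which is a finite intersection of powers of linear segment ideals `(x_1,…,x_h)`,
`1 ≤ h ≤ n`. -/
theorem stronglyStable_iff_sum_of_inter_of_seg_powers
    (n : ℕ) (K : Type*) [Field K]
    (I : Ideal (MvPolynomial (Fin n) K)) (hmon : IsMonomialIdeal n K I) :
    StronglyStableMoves n K I ↔
      ∃ (s : ℕ) (F : Fin s → Ideal (MvPolynomial (Fin n) K)),
        I = ∑ j : Fin s, F j ∧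
        ∀ j : Fin s, ∃ (u : ℕ) (h : Fin u → ℕ) (e : Fin u → ℕ),
          (∀ k, 1 ≤ h k ∧ h k ≤ n) ∧
          F j = ⨅ k : Fin u, segIdeal n K (h k) ^ (e k) := by
  constructor
  · intro hstab
    obtain ⟨S, rfl⟩ := hmon
    obtain ⟨s, g, hg⟩ := exists_fin_span_monomial_eq (R := K) S
    rw [hg, span_monomial_eq_restrictSupportIdeal,
      stronglyStableMoves_restrictSupportIdeal_iff] at hstab
    refine ⟨s, fun j => ⨅ k : Fin n, segIdeal n K (k + 1) ^ partialDegree (k + 1) (g j), ?_,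
      fun j => ⟨n, fun k => k + 1, _, fun k => ⟨Nat.le_add_left 1 k, k.2⟩, rfl⟩⟩
    simp only [hg, span_monomial_eq_restrictSupportIdeal, iInf_segIdeal_pow_partialDegree,
      sum_restrictSupportIdeal]
    congr 1
    exact upperClosure_range_eq_iUnion_borelLE g hstab
  · rintro ⟨s, F, rfl, hF⟩
    choose u h e _ hFe using hF
    simp only [hFe, segIdeal_pow, iInf_restrictSupportIdeal, sum_restrictSupportIdeal,
      stronglyStableMoves_restrictSupportIdeal_iff]
    intro d hd i j hij hdj
    simp only [Set.mem_iUnion, Set.mem_iInter, Set.mem_ofPred_eq] at hd ⊢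
    obtain ⟨l, hl⟩ := hd
    exact ⟨l, fun k => (hl k).trans (borelLE_shift hij hdj _)⟩
end
end
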